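/- arXiv:2105.12540 — 8 statements merged into one kernel-verified Lean document; each statement's English description precedes it below -/
import Mathlib

section
/- Let T be a γ-contraction with respect to the sup-norm on R^N and Π a non-expansive operator with respect to a weighted ℓ2-norm ||·||_κ with positive weights. If n satisfies γ^n ≤ γ_c √κ_min for some γ_c ∈ (0,1), then the composed operator Π ∘ T^n is a γ_c-contraction with respect to ||·||_κ, and hence has a unique fixed point. -/
/-- If `γ^n ≤ γc √κmin`, then `Proj ∘ T^[n]` is a `γc`-contraction in the weighted
ℓ2-norm, and hence has a unique fixed point. -/
theorem stmt_1 (N : ℕ) (hN : 0 < N) (κ : Fin N → ℝ) (hκpos : ∀ i, 0 < κ i)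
    (hκsum : ∑ i, κ i = 1) (γ γc : ℝ) (hγ : γ ∈ Set.Ioo (0:ℝ) 1)
    (hγc : γc ∈ Set.Ioo (0:ℝ) 1)
    (T Proj : (Fin N → ℝ) → (Fin N → ℝ))
    (hT : ∀ Q1 Q2 : Fin N → ℝ,
      (⨆ i, |T Q1 i - T Q2 i|) ≤ γ * ⨆ i, |Q1 i - Q2 i|)
    (hProj : ∀ Q1 Q2 : Fin N → ℝ,
      Real.sqrt (∑ i, κ i * (Proj Q1 i - Proj Q2 i)^2)
        ≤ Real.sqrt (∑ i, κ i * (Q1 i - Q2 i)^2))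
    (κmin : ℝ) (hκmin : κmin = ⨅ i, κ i)
    (n : ℕ) (hn : γ^n ≤ γc * Real.sqrt κmin) :
    (∀ Q1 Q2 : Fin N → ℝ,
      Real.sqrt (∑ i, κ i * (Proj (T^[n] Q1) i - Proj (T^[n] Q2) i)^2)
        ≤ γc * Real.sqrt (∑ i, κ i * (Q1 i - Q2 i)^2)) ∧
    (∃! Q : Fin N → ℝ, Proj (T^[n] Q) = Q) := by
  obtain ⟨hγ0, hγ1⟩ := hγ
  obtain ⟨hγc0, hγc1⟩ := hγc
  haveI : Nonempty (Fin N) := ⟨⟨0, hN⟩⟩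
  set D : (Fin N → ℝ) → (Fin N → ℝ) → ℝ :=
    fun Q1 Q2 => Real.sqrt (∑ i, κ i * (Q1 i - Q2 i)^2) with hD
  set S : (Fin N → ℝ) → (Fin N → ℝ) → ℝ :=
    fun Q1 Q2 => ⨆ i, |Q1 i - Q2 i| with hS
  have hbdd : ∀ Q1 Q2 : Fin N → ℝ, BddAbove (Set.range fun i => |Q1 i - Q2 i|) :=
    fun Q1 Q2 => Set.Finite.bddAbove (Set.finite_range _)
  have hSnonneg : ∀ Q1 Q2, 0 ≤ S Q1 Q2 := fun Q1 Q2 =>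
    le_trans (abs_nonneg _) (le_ciSup (hbdd Q1 Q2) (Classical.arbitrary _))
  have hDnonneg : ∀ Q1 Q2, 0 ≤ D Q1 Q2 := fun Q1 Q2 => Real.sqrt_nonneg _
  -- κmin positive
  have hκminpos : 0 < κmin := by
    rw [hκmin]
    obtain ⟨i0, hi0⟩ := Finite.exists_min κ
    exact lt_of_lt_of_le (hκpos i0) (le_ciInf hi0)
  have hsqrtpos : 0 < Real.sqrt κmin := Real.sqrt_pos.2 hκminpos
  -- κmin ≤ κ i
  have hκminle : ∀ i, κmin ≤ κ i := by
    intro i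
    rw [hκmin]
    exact ciInf_le (Set.Finite.bddBelow (Set.finite_range _)) i
  -- D ≤ S
  have hDS : ∀ Q1 Q2, D Q1 Q2 ≤ S Q1 Q2 := by
    intro Q1 Q2
    have : ∑ i, κ i * (Q1 i - Q2 i)^2 ≤ (S Q1 Q2)^2 := by
      calc ∑ i, κ i * (Q1 i - Q2 i)^2 ≤ ∑ i, κ i * (S Q1 Q2)^2 := by
            refine Finset.sum_le_sum fun i _ => ?_
            refine mul_le_mul_of_nonneg_left ?_ (hκpos i).le
            rw [← sq_abs]
            exact pow_le_pow_left₀ (abs_nonneg _) (le_ciSup (hbdd Q1 Q2) i) 2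
        _ = (S Q1 Q2)^2 := by rw [← Finset.sum_mul, hκsum, one_mul]
    calc D Q1 Q2 ≤ Real.sqrt ((S Q1 Q2)^2) := Real.sqrt_le_sqrt this
      _ = S Q1 Q2 := Real.sqrt_sq (hSnonneg Q1 Q2)
  -- S ≤ D / √κmin
  have hSD : ∀ Q1 Q2, S Q1 Q2 ≤ D Q1 Q2 / Real.sqrt κmin := by
    intro Q1 Q2
    refine ciSup_le fun i => ?_
    rw [le_div_iff₀ hsqrtpos]
    have h1 : |Q1 i - Q2 i| * Real.sqrt κmin = Real.sqrt (κmin * (Q1 i - Q2 i)^2) := by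
      rw [Real.sqrt_mul hκminpos.le, Real.sqrt_sq_eq_abs, mul_comm]
    rw [h1]
    refine Real.sqrt_le_sqrt ?_
    calc κmin * (Q1 i - Q2 i)^2 ≤ κ i * (Q1 i - Q2 i)^2 :=
          mul_le_mul_of_nonneg_right (hκminle i) (sq_nonneg _)
      _ ≤ ∑ j, κ j * (Q1 j - Q2 j)^2 :=
          Finset.single_le_sum (f := fun j => κ j * (Q1 j - Q2 j)^2)
            (fun j _ => mul_nonneg (hκpos j).le (sq_nonneg _)) (Finset.mem_univ i)
  -- T iterate contraction in sup norm
  have hTn : ∀ (k : ℕ) Q1 Q2, S (T^[k] Q1) (T^[k] Q2) ≤ γ^k * S Q1 Q2 := by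
    intro k Q1 Q2
    induction k with
    | zero => simp
    | succ k ih =>
      rw [Function.iterate_succ_apply', Function.iterate_succ_apply']
      calc S (T (T^[k] Q1)) (T (T^[k] Q2)) ≤ γ * S (T^[k] Q1) (T^[k] Q2) := hT _ _
        _ ≤ γ * (γ^k * S Q1 Q2) := mul_le_mul_of_nonneg_left ih hγ0.le
        _ = γ^(k+1) * S Q1 Q2 := by ring
  -- the key contraction estimate
  set F : (Fin N → ℝ) → (Fin N → ℝ) := fun Q => Proj (T^[n] Q) with hF
  have key : ∀ Q1 Q2, D (F Q1) (F Q2) ≤ γc * D Q1 Q2 := by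
    intro Q1 Q2
    calc D (F Q1) (F Q2) ≤ D (T^[n] Q1) (T^[n] Q2) := hProj _ _
      _ ≤ S (T^[n] Q1) (T^[n] Q2) := hDS _ _
      _ ≤ γ^n * S Q1 Q2 := hTn n _ _
      _ ≤ γ^n * (D Q1 Q2 / Real.sqrt κmin) :=
          mul_le_mul_of_nonneg_left (hSD _ _) (pow_nonneg hγ0.le n)
      _ ≤ (γc * Real.sqrt κmin) * (D Q1 Q2 / Real.sqrt κmin) :=
          mul_le_mul_of_nonneg_right hn (div_nonneg (hDnonneg _ _) hsqrtpos.le)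
      _ = γc * D Q1 Q2 := by field_simp
  refine ⟨key, ?_⟩
  -- iterates of F
  have hFk : ∀ (k : ℕ) Q1 Q2, D (F^[k] Q1) (F^[k] Q2) ≤ γc^k * D Q1 Q2 := by
    intro k
    induction k with
    | zero => intro Q1 Q2; simp
    | succ m ih =>
      intro Q1 Q2
      rw [Function.iterate_succ_apply', Function.iterate_succ_apply']
      calc D (F (F^[m] Q1)) (F (F^[m] Q2)) ≤ γc * D (F^[m] Q1) (F^[m] Q2) := key _ _
        _ ≤ γc * (γc^m * D Q1 Q2) := mul_le_mul_of_nonneg_left (ih Q1 Q2) hγc0.le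
        _ = γc^(m+1) * D Q1 Q2 := by ring
  -- dist = S
  have hdist : ∀ Q1 Q2 : Fin N → ℝ, dist Q1 Q2 = S Q1 Q2 := by
    intro Q1 Q2
    refine le_antisymm ?_ ?_
    · refine (dist_pi_le_iff (hSnonneg Q1 Q2)).2 fun i => ?_
      rw [Real.dist_eq]
      exact le_ciSup (hbdd Q1 Q2) i
    · refine ciSup_le fun i => ?_
      rw [← Real.dist_eq]
      exact dist_le_pi_dist Q1 Q2 i
  -- choose m with γc^m < √κmin
  obtain ⟨m, hm⟩ := exists_pow_lt_of_lt_one hsqrtpos hγc1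
  set K : NNReal := ⟨γc^m / Real.sqrt κmin,
    div_nonneg (pow_nonneg hγc0.le m) hsqrtpos.le⟩ with hK
  have hKlt : K < 1 := by
    rw [← NNReal.coe_lt_coe]
    push_cast
    exact (div_lt_one hsqrtpos).2 hm
  have hC : ContractingWith K (F^[m]) := by
    refine ⟨hKlt, LipschitzWith.of_dist_le_mul fun Q1 Q2 => ?_⟩
    rw [hdist, hdist]
    calc S (F^[m] Q1) (F^[m] Q2) ≤ D (F^[m] Q1) (F^[m] Q2) / Real.sqrt κmin := hSD _ _
      _ ≤ γc^m * D Q1 Q2 / Real.sqrt κmin :=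
          div_le_div_of_nonneg_right (hFk m Q1 Q2) hsqrtpos.le
      _ ≤ γc^m * S Q1 Q2 / Real.sqrt κmin := by
          apply div_le_div_of_nonneg_right _ hsqrtpos.le
          exact mul_le_mul_of_nonneg_left (hDS Q1 Q2) (pow_nonneg hγc0.le m)
      _ = (K : ℝ) * S Q1 Q2 := by
          simp only [hK, NNReal.coe_mk]
          show _ = (γc^m / Real.sqrt κmin) * S Q1 Q2
          ring
  set x := hC.fixedPoint (F^[m]) with hx
  have hxfix : Function.IsFixedPt (F^[m]) x := hC.fixedPoint_isFixedPt
  have hFxfix : Function.IsFixedPt (F^[m]) (F x) := by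
    show F^[m] (F x) = F x
    rw [← Function.iterate_succ_apply, Function.iterate_succ_apply', hxfix]
  have hFx : F x = x := by
    rw [hC.fixedPoint_unique hFxfix, ← hC.fixedPoint_unique hxfix]
  refine ⟨x, hFx, fun y hy => ?_⟩
  have hy' : Function.IsFixedPt F y := hy
  have : Function.IsFixedPt (F^[m]) y := Function.IsFixedPt.iterate hy' m
  rw [hC.fixedPoint_unique this, ← hC.fixedPoint_unique hxfix]
end

section
/- Let w1, w2 ∈ R^d, x = (s_0,a_0,…,s_n,a_n), ρ(s,a) = π(a|s)/π_b(a|s) ≤ ζ for all (s,a), and suppose ||φ(s,a)||_2 ≤ 1 for all (s,a). Define F(w,x) = φ(s_0,a_0)·Σ_{i=0}^{n-1} γ^i (Π_{j=1}^i ρ(s_j,a_j)) (R(s_i,a_i) + γρ(s_{i+1},a_{i+1})φ(s_{i+1},a_{i+1})^⊤w − φ(s_i,a_i)^⊤w). Then ||F(w1,x) − F(w2,x)||_2 ≤ (1 + (γζ)^n)||w1 − w2||_2 ≤ f(γζ)||w1 − w2||_2, where f(y) = Σ_{i=0}^n y^i. -/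
lemma cs_aux {d : ℕ} (f g : Fin d → ℝ) :
    |∑ k, f k * g k| ≤ Real.sqrt (∑ k, (f k)^2) * Real.sqrt (∑ k, (g k)^2) := by
  have h := Finset.sum_mul_sq_le_sq_mul_sq Finset.univ f g
  calc |∑ k, f k * g k| = Real.sqrt ((∑ k, f k * g k)^2) := (Real.sqrt_sq_eq_abs _).symm
    _ ≤ Real.sqrt ((∑ k, (f k)^2) * (∑ k, (g k)^2)) := Real.sqrt_le_sqrt h
    _ = _ := Real.sqrt_mul (by positivity) _

/-- Lipschitz bound on the TD operator `F(·,x)` of the off-policy `n`-step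
TD-learning algorithm: `‖F(w1,x) - F(w2,x)‖₂ ≤ (1+(γζ)^n)‖w1-w2‖₂ ≤ f(γζ)‖w1-w2‖₂`. -/
theorem stmt_5 (S A : Type) [Fintype S] [Fintype A] (d n : ℕ)
    (φ : S → A → Fin d → ℝ) (hφ : ∀ s a, Real.sqrt (∑ i, (φ s a i)^2) ≤ 1)
    (R : S → A → ℝ) (hR : ∀ s a, |R s a| ≤ 1)
    (γ ζ : ℝ) (hγ : γ ∈ Set.Ioo (0:ℝ) 1) (hζ : 0 ≤ ζ)
    (ρ : S → A → ℝ) (hρ : ∀ s a, 0 ≤ ρ s a ∧ ρ s a ≤ ζ)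
    (st : ℕ → S) (ac : ℕ → A)
    (F : (Fin d → ℝ) → Fin d → ℝ)
    (hF : ∀ w k, F w k = φ (st 0) (ac 0) k *
      ∑ i ∈ Finset.range n, γ^i * (∏ j ∈ Finset.Icc 1 i, ρ (st j) (ac j)) *
        (R (st i) (ac i)
          + γ * ρ (st (i+1)) (ac (i+1)) * (∑ l, φ (st (i+1)) (ac (i+1)) l * w l)
          - ∑ l, φ (st i) (ac i) l * w l))
    (w1 w2 : Fin d → ℝ) :
    Real.sqrt (∑ k, (F w1 k - F w2 k)^2)
        ≤ (1 + (γ*ζ)^n) * Real.sqrt (∑ k, (w1 k - w2 k)^2) ∧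
    Real.sqrt (∑ k, (F w1 k - F w2 k)^2)
        ≤ (∑ i ∈ Finset.range (n+1), (γ*ζ)^i) * Real.sqrt (∑ k, (w1 k - w2 k)^2) := by
  obtain ⟨hγ0, hγ1⟩ := hγ
  set v : Fin d → ℝ := fun k => w1 k - w2 k with hv
  set Nv : ℝ := Real.sqrt (∑ k, (v k)^2) with hNv
  have hNv0 : 0 ≤ Nv := Real.sqrt_nonneg _
  set P : ℕ → ℝ := fun i => ∏ j ∈ Finset.Icc 1 i, ρ (st j) (ac j) with hP
  set dp : ℕ → ℝ := fun i => ∑ l, φ (st i) (ac i) l * v l with hdp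
  set t : ℕ → ℝ := fun i => γ^i * P i * dp i with ht
  set c : ℝ := ∑ i ∈ Finset.range n,
      γ^i * P i * (γ * ρ (st (i+1)) (ac (i+1)) * dp (i+1) - dp i) with hc
  -- difference of F
  have key : ∀ k, F w1 k - F w2 k = φ (st 0) (ac 0) k * c := by
    intro k
    rw [hF, hF, ← mul_sub, ← Finset.sum_sub_distrib]
    congr 1
    apply Finset.sum_congr rfl
    intro i _
    have e1 : (∑ l, φ (st (i+1)) (ac (i+1)) l * w1 l)
        - (∑ l, φ (st (i+1)) (ac (i+1)) l * w2 l) = dp (i+1) := by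
      rw [hdp, ← Finset.sum_sub_distrib]
      exact Finset.sum_congr rfl fun l _ => by simp [hv]; ring
    have e2 : (∑ l, φ (st i) (ac i) l * w1 l)
        - (∑ l, φ (st i) (ac i) l * w2 l) = dp i := by
      rw [hdp, ← Finset.sum_sub_distrib]
      exact Finset.sum_congr rfl fun l _ => by simp [hv]; ring
    rw [← mul_sub]
    congr 1
    rw [← e1, ← e2]; ring
  -- telescoping
  have tel : c = t n - t 0 := by
    rw [hc, ← Finset.sum_range_sub t]
    apply Finset.sum_congr rfl
    intro i _
    have hPs : P (i+1) = P i * ρ (st (i+1)) (ac (i+1)) := by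
      rw [hP]
      exact Finset.prod_Icc_succ_top (by omega) _
    simp only [ht, hPs]
    ring
  -- bounds on t 0, t n
  have hdpb : ∀ i, |dp i| ≤ Nv := by
    intro i
    calc |dp i| ≤ Real.sqrt (∑ l, (φ (st i) (ac i) l)^2) * Nv := cs_aux _ _
      _ ≤ 1 * Nv := by
        apply mul_le_mul_of_nonneg_right (hφ _ _) hNv0
      _ = Nv := one_mul _
  have ht0 : |t 0| ≤ Nv := by
    simpa [ht, hP] using hdpb 0
  have hPn : ∀ i, 0 ≤ P i ∧ P i ≤ ζ^i := by
    intro i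
    constructor
    · exact Finset.prod_nonneg fun j _ => (hρ _ _).1
    · rw [hP]
      calc (∏ j ∈ Finset.Icc 1 i, ρ (st j) (ac j)) ≤ ∏ _j ∈ Finset.Icc 1 i, ζ :=
          Finset.prod_le_prod (fun j _ => (hρ _ _).1) (fun j _ => (hρ _ _).2)
        _ = ζ ^ (Finset.Icc 1 i).card := Finset.prod_const _
        _ = ζ^i := by rw [Nat.card_Icc]; norm_num
  have htn : |t n| ≤ (γ*ζ)^n * Nv := by
    rw [ht]
    rw [abs_mul, abs_mul, abs_pow, abs_of_pos hγ0, abs_of_nonneg (hPn n).1]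
    calc γ^n * P n * |dp n| ≤ γ^n * ζ^n * Nv := by
          apply mul_le_mul (by
            apply mul_le_mul_of_nonneg_left (hPn n).2 (by positivity))
            (hdpb n) (abs_nonneg _) (by positivity)
      _ = (γ*ζ)^n * Nv := by rw [mul_pow]
  have hcb : |c| ≤ (1 + (γ*ζ)^n) * Nv := by
    rw [tel]
    calc |t n - t 0| ≤ |t n| + |t 0| := abs_sub _ _
      _ ≤ (γ*ζ)^n * Nv + Nv := add_le_add htn ht0
      _ = (1 + (γ*ζ)^n) * Nv := by ring
  -- norm of difference
  have hnorm : Real.sqrt (∑ k, (F w1 k - F w2 k)^2)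
      ≤ |c| := by
    have : (∑ k, (F w1 k - F w2 k)^2) = c^2 * (∑ k, (φ (st 0) (ac 0) k)^2) := by
      rw [Finset.mul_sum]
      exact Finset.sum_congr rfl fun k _ => by rw [key k]; ring
    rw [this, Real.sqrt_mul (by positivity), Real.sqrt_sq_eq_abs]
    calc |c| * Real.sqrt (∑ k, (φ (st 0) (ac 0) k)^2) ≤ |c| * 1 :=
        mul_le_mul_of_nonneg_left (hφ _ _) (abs_nonneg _)
      _ = |c| := mul_one _
  have h1 : Real.sqrt (∑ k, (F w1 k - F w2 k)^2) ≤ (1 + (γ*ζ)^n) * Nv :=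
    hnorm.trans hcb
  refine ⟨h1, ?_⟩
  rcases Nat.eq_zero_or_pos n with hn | hn
  · subst hn
    have : c = 0 := by simp [hc]
    have : Real.sqrt (∑ k, (F w1 k - F w2 k)^2) ≤ 0 := by
      simpa [this] using hnorm
    refine this.trans ?_
    positivity
  · refine h1.trans (mul_le_mul_of_nonneg_right ?_ hNv0)
    have hsub : ({0, n} : Finset ℕ) ⊆ Finset.range (n+1) := by
      intro x hx
      simp only [Finset.mem_insert, Finset.mem_singleton] at hx
      rcases hx with rfl | rfl <;> simp [Finset.mem_range] <;> omega
    calc 1 + (γ*ζ)^n = ∑ i ∈ ({0, n} : Finset ℕ), (γ*ζ)^i := by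
          rw [Finset.sum_pair (by omega)]; norm_num
      _ ≤ ∑ i ∈ Finset.range (n+1), (γ*ζ)^i :=
          Finset.sum_le_sum_of_subset_of_nonneg hsub (fun i _ _ => by positivity)
end

section
/- Suppose the composed operator ΠT^n is a γ_c-contraction with respect to ||·||_{κ_b}, T^n is affine, and the equation Φw = ΠT^n(Φw) has unique solution w_π. Let F̄(w) = Φ^⊤K(T^n(Φw) − Φw), where K = diag(κ_b) and Π = Φ(Φ^⊤KΦ)^{-1}Φ^⊤K. Then for all w ∈ R^d: ⟨w − w_π, F̄(w)⟩ ≤ −(1−γ_c)||Φ(w−w_π)||²_{κ_b} ≤ −(1−γ_c)λ_min·||w − w_π||²_2, where λ_min is the smallest eigenvalue of the positive definite matrix Φ^⊤KΦ. -/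
open Matrix

/-- Weighted Cauchy–Schwarz: `∑ κ a b ≤ √(∑ κ a²) · √(∑ κ b²)`. -/
lemma weighted_cs {n : ℕ} (κ a bb : Fin n → ℝ) (hκ : ∀ i, 0 ≤ κ i) :
    ∑ i, κ i * (a i * bb i) ≤
      Real.sqrt (∑ i, κ i * (a i)^2) * Real.sqrt (∑ i, κ i * (bb i)^2) := by
  have key : (∑ i, κ i * (a i * bb i))^2 ≤
      (∑ i, κ i * (a i)^2) * ∑ i, κ i * (bb i)^2 := by
    have := Finset.sum_mul_sq_le_sq_mul_sq Finset.univ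
      (fun i => Real.sqrt (κ i) * a i) (fun i => Real.sqrt (κ i) * bb i)
    have h1 : ∀ i : Fin n, (Real.sqrt (κ i) * a i) * (Real.sqrt (κ i) * bb i)
        = κ i * (a i * bb i) := by
      intro i
      have : Real.sqrt (κ i) * Real.sqrt (κ i) = κ i := Real.mul_self_sqrt (hκ i)
      rw [mul_mul_mul_comm, this]
    have h2 : ∀ i : Fin n, (Real.sqrt (κ i) * a i)^2 = κ i * (a i)^2 := by
      intro i
      rw [mul_pow, Real.sq_sqrt (hκ i)]
    have h3 : ∀ i : Fin n, (Real.sqrt (κ i) * bb i)^2 = κ i * (bb i)^2 := by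
      intro i
      rw [mul_pow, Real.sq_sqrt (hκ i)]
    simpa [h1, h2, h3] using this
  have hA : 0 ≤ ∑ i, κ i * (a i)^2 :=
    Finset.sum_nonneg fun i _ => mul_nonneg (hκ i) (sq_nonneg _)
  have hB : 0 ≤ ∑ i, κ i * (bb i)^2 :=
    Finset.sum_nonneg fun i _ => mul_nonneg (hκ i) (sq_nonneg _)
  calc ∑ i, κ i * (a i * bb i)
      ≤ |∑ i, κ i * (a i * bb i)| := le_abs_self _
    _ = Real.sqrt ((∑ i, κ i * (a i * bb i))^2) := (Real.sqrt_sq_eq_abs _).symm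
    _ ≤ Real.sqrt ((∑ i, κ i * (a i)^2) * ∑ i, κ i * (bb i)^2) :=
        Real.sqrt_le_sqrt key
    _ = _ := Real.sqrt_mul hA _

/-- Negative drift of the expected TD operator `F̄(w) = Φᵀ K (Tⁿ(Φw) − Φw)`:
`⟨w − wπ, F̄(w)⟩ ≤ −(1−γc)‖Φ(w−wπ)‖²_{κ_b} ≤ −(1−γc)lmin‖w−wπ‖²₂`. -/
theorem stmt_7 (N d : ℕ) (Φ : Matrix (Fin N) (Fin d) ℝ)
    (κ : Fin N → ℝ) (hκpos : ∀ i, 0 < κ i) (hκsum : ∑ i, κ i = 1)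
    (γc : ℝ) (hγc : γc ∈ Set.Ioo (0:ℝ) 1)
    (Tn : (Fin N → ℝ) → (Fin N → ℝ))
    (M : Matrix (Fin N) (Fin N) ℝ) (b : Fin N → ℝ)
    (hTn : ∀ Q, Tn Q = M *ᵥ Q + b)
    (Proj : (Fin N → ℝ) → (Fin N → ℝ))
    (hProjDef : ∀ Q, Proj Q =
      Φ *ᵥ ((Φᵀ * Matrix.diagonal κ * Φ)⁻¹ *ᵥ (Φᵀ *ᵥ (fun i => κ i * Q i))))
    (hContract : ∀ Q1 Q2 : Fin N → ℝ,
      Real.sqrt (∑ i, κ i * (Proj (Tn Q1) i - Proj (Tn Q2) i)^2)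
        ≤ γc * Real.sqrt (∑ i, κ i * (Q1 i - Q2 i)^2))
    (wπ : Fin d → ℝ) (hwπ : Φ *ᵥ wπ = Proj (Tn (Φ *ᵥ wπ)))
    (hwπuniq : ∀ w : Fin d → ℝ, Φ *ᵥ w = Proj (Tn (Φ *ᵥ w)) → w = wπ)
    (Fbar : (Fin d → ℝ) → (Fin d → ℝ))
    (hFbar : ∀ w, Fbar w = Φᵀ *ᵥ (fun i => κ i * (Tn (Φ *ᵥ w) i - (Φ *ᵥ w) i)))
    (lmin : ℝ) (hlpos : 0 < lmin)
    (hlmin : ∀ v : Fin d → ℝ,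
      lmin * ∑ k, (v k)^2 ≤ ∑ i, κ i * ((Φ *ᵥ v) i)^2) :
    ∀ w : Fin d → ℝ,
      (∑ k, (w k - wπ k) * Fbar w k)
          ≤ -(1 - γc) * ∑ i, κ i * ((Φ *ᵥ (w - wπ)) i)^2 ∧
      (∑ k, (w k - wπ k) * Fbar w k)
          ≤ -(1 - γc) * lmin * ∑ k, (w k - wπ k)^2 := by
  intro w
  set A := Φᵀ * Matrix.diagonal κ * Φ with hA
  -- A is invertible
  have hAdet : IsUnit A.det := by
    by_contra h
    have hdet0 : A.det = 0 := by
      simpa [isUnit_iff_ne_zero] using h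
    obtain ⟨v, hv0, hAv⟩ := (Matrix.exists_mulVec_eq_zero_iff).2 hdet0
    have hquad : v ⬝ᵥ (A *ᵥ v) = ∑ i, κ i * ((Φ *ᵥ v) i)^2 := by
      rw [hA, ← Matrix.mulVec_mulVec, ← Matrix.mulVec_mulVec,
        Matrix.dotProduct_mulVec, Matrix.vecMul_transpose]
      simp [dotProduct, Matrix.mulVec_diagonal]
      ring_nf
      apply Finset.sum_congr rfl
      intro i _
      ring
    have hpos : 0 < ∑ i, κ i * ((Φ *ᵥ v) i)^2 := by
      have h1 : lmin * ∑ k, (v k)^2 ≤ ∑ i, κ i * ((Φ *ᵥ v) i)^2 := hlmin v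
      have h2 : 0 < ∑ k, (v k)^2 := by
        by_contra h2
        push_neg at h2
        have : ∑ k, (v k)^2 = 0 :=
          le_antisymm h2 (Finset.sum_nonneg fun i _ => sq_nonneg _)
        have := (Finset.sum_eq_zero_iff_of_nonneg (fun i _ => sq_nonneg (v i))).1 this
        apply hv0
        funext k
        have := this k (Finset.mem_univ k)
        exact pow_eq_zero_iff (two_ne_zero) |>.1 this
      nlinarith
    rw [hAv] at hquad
    simp [dotProduct] at hquad
    linarith [hquad ▸ hpos]
  -- key identity: ΦᵀK(ΠQ) = ΦᵀKQ
  have hkey : ∀ Q : Fin N → ℝ,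
      Φᵀ *ᵥ (fun i => κ i * Proj Q i) = Φᵀ *ᵥ (fun i => κ i * Q i) := by
    intro Q
    rw [hProjDef Q]
    set c := Φᵀ *ᵥ (fun i => κ i * Q i) with hc
    have step1 : (fun i => κ i * (Φ *ᵥ (A⁻¹ *ᵥ c)) i)
        = Matrix.diagonal κ *ᵥ (Φ *ᵥ (A⁻¹ *ᵥ c)) := by
      funext i
      rw [Matrix.mulVec_diagonal]
    rw [step1, Matrix.mulVec_mulVec, Matrix.mulVec_mulVec, ← hA,
      Matrix.mulVec_mulVec, Matrix.mul_nonsing_inv A hAdet, Matrix.one_mulVec]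
  -- notation
  set v : Fin d → ℝ := w - wπ with hv
  set x : Fin N → ℝ := Φ *ᵥ v with hx
  set Q : Fin N → ℝ := Tn (Φ *ᵥ w) with hQ
  set P : Fin N → ℝ := Proj Q with hP
  have hxw : Φ *ᵥ w = (Φ *ᵥ wπ) + x := by
    rw [hx, hv, Matrix.mulVec_sub]
    funext i; simp
  set T : ℝ := ∑ i, κ i * (x i)^2 with hT
  have hT0 : 0 ≤ T :=
    Finset.sum_nonneg fun i _ => mul_nonneg (hκpos i).le (sq_nonneg _)
  -- compute the LHS sum
  have hsum : (∑ k, (w k - wπ k) * Fbar w k)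
      = (∑ i, κ i * (x i * (Q i - P i)))
        + (∑ i, κ i * (x i * (P i - (Φ *ᵥ wπ) i))) - T := by
    have e1 : (∑ k, (w k - wπ k) * Fbar w k) = v ⬝ᵥ (Fbar w) := by
      simp [dotProduct, hv]
    rw [e1, hFbar w, Matrix.dotProduct_mulVec, Matrix.vecMul_transpose, ← hx]
    have : x ⬝ᵥ (fun i => κ i * (Tn (Φ *ᵥ w) i - (Φ *ᵥ w) i))
        = ∑ i, κ i * (x i * (Q i - P i)) + ∑ i, κ i * (x i * (P i - (Φ *ᵥ wπ) i)) - T := by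
      rw [← Finset.sum_add_distrib, hT, ← Finset.sum_sub_distrib]
      simp only [dotProduct]
      apply Finset.sum_congr rfl
      intro i _
      have : (Φ *ᵥ w) i = (Φ *ᵥ wπ) i + x i := by rw [hxw]; simp
      rw [← hQ, this]
      ring
    rw [this]
  -- orthogonality: first term vanishes
  have horth : (∑ i, κ i * (x i * (Q i - P i))) = 0 := by
    have h0 : Φᵀ *ᵥ (fun i => κ i * (Q i - P i)) = 0 := by
      have : (fun i => κ i * (Q i - P i))
          = (fun i => κ i * Q i) - (fun i => κ i * P i) := by
        funext i; simp; ring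
      rw [this, Matrix.mulVec_sub, hkey Q, sub_self]
    have : (∑ i, κ i * (x i * (Q i - P i)))
        = v ⬝ᵥ (Φᵀ *ᵥ (fun i => κ i * (Q i - P i))) := by
      rw [Matrix.dotProduct_mulVec, Matrix.vecMul_transpose, ← hx]
      simp only [dotProduct]
      apply Finset.sum_congr rfl
      intro i _
      ring
    rw [this, h0]
    simp
  -- second term ≤ γc * T
  have hterm2 : (∑ i, κ i * (x i * (P i - (Φ *ᵥ wπ) i))) ≤ γc * T := by
    have hcs := weighted_cs κ x (fun i => P i - (Φ *ᵥ wπ) i) (fun i => (hκpos i).le)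
    have hcontr : Real.sqrt (∑ i, κ i * (P i - (Φ *ᵥ wπ) i)^2)
        ≤ γc * Real.sqrt T := by
      have := hContract (Φ *ᵥ w) (Φ *ᵥ wπ)
      rw [← hwπ] at this
      have hx2 : ∀ i : Fin N, (Φ *ᵥ w) i - (Φ *ᵥ wπ) i = x i := by
        intro i; rw [hxw]; simp
      simp only [hx2] at this
      rw [← hQ] at this
      convert this using 3
    have hsq : Real.sqrt T * Real.sqrt T = T := Real.mul_self_sqrt hT0
    calc (∑ i, κ i * (x i * (P i - (Φ *ᵥ wπ) i)))
        ≤ Real.sqrt (∑ i, κ i * (x i)^2)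
            * Real.sqrt (∑ i, κ i * (P i - (Φ *ᵥ wπ) i)^2) := hcs
      _ ≤ Real.sqrt T * (γc * Real.sqrt T) := by
          apply mul_le_mul_of_nonneg_left hcontr (Real.sqrt_nonneg _)
      _ = γc * (Real.sqrt T * Real.sqrt T) := by ring
      _ = γc * T := by rw [hsq]
  have main : (∑ k, (w k - wπ k) * Fbar w k) ≤ -(1 - γc) * T := by
    rw [hsum, horth]
    linarith
  constructor
  · exact main
  · have h2 : -(1 - γc) * T ≤ -(1 - γc) * lmin * ∑ k, (w k - wπ k)^2 := by
      have hl := hlmin v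
      have hγ1 : 0 < 1 - γc := by linarith [hγc.2]
      have hvk : (∑ k, (v k)^2) = ∑ k, (w k - wπ k)^2 := by
        apply Finset.sum_congr rfl; intro k _; rw [hv]; simp
      rw [← hvk]
      rw [← hx] at hl
      nlinarith
    linarith
end

section
/- Let Q^π ∈ R^N with ||Q^π||_{κ_b} ≤ 1/(1−γ), and let w_π solve the projected Bellman equation Φw = Π_{κ_b}T^n_π(Φw), where Π_{κ_b}T^n_π is a γ_c-contraction in ||·||_{κ_b} and Q^π is a fixed point of T^n_π. Then ||Q^π − Φw_π||_{κ_b} ≤ (1/√(1−γ_c²))·||Π_{κ_b}Q^π − Q^π||_{κ_b}. -/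
open Matrix

/-- Function-approximation error bound for the solution of the projected Bellman
equation: `‖Qπ − Φwπ‖_{κ_b} ≤ (1/√(1−γc²))‖Π Qπ − Qπ‖_{κ_b}`. -/
theorem stmt_8 (N d : ℕ) (Φ : Matrix (Fin N) (Fin d) ℝ)
    (κ : Fin N → ℝ) (hκpos : ∀ i, 0 < κ i) (hκsum : ∑ i, κ i = 1)
    (γ γc : ℝ) (hγ : γ ∈ Set.Ioo (0:ℝ) 1) (hγc : γc ∈ Set.Ioo (0:ℝ) 1)
    (Proj : (Fin N → ℝ) → (Fin N → ℝ))
    -- `Proj` is the orthogonal projection onto the range of `Φ` in the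
    -- `κ`-weighted inner product:
    (hProjRange : ∀ Q, ∃ u : Fin d → ℝ, Proj Q = Φ *ᵥ u)
    (hProjOrth : ∀ (Q : Fin N → ℝ) (v : Fin d → ℝ),
      ∑ i, κ i * (Q i - Proj Q i) * ((Φ *ᵥ v) i) = 0)
    (Tn : (Fin N → ℝ) → (Fin N → ℝ))
    (hContract : ∀ Q1 Q2 : Fin N → ℝ,
      Real.sqrt (∑ i, κ i * (Proj (Tn Q1) i - Proj (Tn Q2) i)^2)
        ≤ γc * Real.sqrt (∑ i, κ i * (Q1 i - Q2 i)^2))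
    (Qπ : Fin N → ℝ) (hQnorm : Real.sqrt (∑ i, κ i * (Qπ i)^2) ≤ 1 / (1 - γ))
    (hQfix : Tn Qπ = Qπ)
    (wπ : Fin d → ℝ) (hwπ : Φ *ᵥ wπ = Proj (Tn (Φ *ᵥ wπ))) :
    Real.sqrt (∑ i, κ i * (Qπ i - (Φ *ᵥ wπ) i)^2)
      ≤ (1 / Real.sqrt (1 - γc^2)) *
          Real.sqrt (∑ i, κ i * (Proj Qπ i - Qπ i)^2) := by
  obtain ⟨hγc0, hγc1⟩ := hγc
  set S1 := ∑ i, κ i * (Qπ i - (Φ *ᵥ wπ) i)^2 with hS1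
  set S2 := ∑ i, κ i * (Proj Qπ i - Qπ i)^2 with hS2
  set S3 := ∑ i, κ i * (Proj Qπ i - (Φ *ᵥ wπ) i)^2 with hS3
  have hS1nn : 0 ≤ S1 := Finset.sum_nonneg fun i _ =>
    mul_nonneg (hκpos i).le (sq_nonneg _)
  have hS2nn : 0 ≤ S2 := Finset.sum_nonneg fun i _ =>
    mul_nonneg (hκpos i).le (sq_nonneg _)
  have hS3nn : 0 ≤ S3 := Finset.sum_nonneg fun i _ =>
    mul_nonneg (hκpos i).le (sq_nonneg _)
  -- Pythagoras: S1 = S2 + S3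
  obtain ⟨u, hu⟩ := hProjRange Qπ
  have hcross : ∑ i, κ i * (Qπ i - Proj Qπ i) * ((Φ *ᵥ (u - wπ)) i) = 0 :=
    hProjOrth Qπ (u - wπ)
  have hcross' : ∑ i, κ i * (Qπ i - Proj Qπ i) * (Proj Qπ i - (Φ *ᵥ wπ) i) = 0 := by
    rw [← hcross]
    apply Finset.sum_congr rfl
    intro i _
    have : (Φ *ᵥ (u - wπ)) i = Proj Qπ i - (Φ *ᵥ wπ) i := by
      rw [Matrix.mulVec_sub, hu]; simp
    rw [this]
  have hpyth : S1 = S2 + S3 := by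
    have expand : ∀ i, κ i * (Qπ i - (Φ *ᵥ wπ) i)^2
        = κ i * (Proj Qπ i - Qπ i)^2 + κ i * (Proj Qπ i - (Φ *ᵥ wπ) i)^2
          + 2 * (κ i * (Qπ i - Proj Qπ i) * (Proj Qπ i - (Φ *ᵥ wπ) i)) := by
      intro i; ring
    rw [hS1, hS2, hS3]
    calc ∑ i, κ i * (Qπ i - (Φ *ᵥ wπ) i)^2
        = ∑ i, (κ i * (Proj Qπ i - Qπ i)^2 + κ i * (Proj Qπ i - (Φ *ᵥ wπ) i)^2
          + 2 * (κ i * (Qπ i - Proj Qπ i) * (Proj Qπ i - (Φ *ᵥ wπ) i))) := by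
          exact Finset.sum_congr rfl fun i _ => expand i
      _ = (∑ i, κ i * (Proj Qπ i - Qπ i)^2) + (∑ i, κ i * (Proj Qπ i - (Φ *ᵥ wπ) i)^2)
          + 2 * ∑ i, κ i * (Qπ i - Proj Qπ i) * (Proj Qπ i - (Φ *ᵥ wπ) i) := by
          rw [Finset.sum_add_distrib, Finset.sum_add_distrib, ← Finset.mul_sum]
      _ = _ := by rw [hcross']; ring
  -- contraction: S3 ≤ γc² S1
  have hcontr := hContract Qπ (Φ *ᵥ wπ)
  rw [hQfix, ← hwπ] at hcontr
  have hS3le : S3 ≤ γc^2 * S1 := by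
    have h1 : Real.sqrt S3 ≤ γc * Real.sqrt S1 := hcontr
    have := mul_self_le_mul_self (Real.sqrt_nonneg S3) h1
    rw [Real.mul_self_sqrt hS3nn] at this
    calc S3 ≤ (γc * Real.sqrt S1) * (γc * Real.sqrt S1) := this
      _ = γc^2 * (Real.sqrt S1 * Real.sqrt S1) := by ring
      _ = γc^2 * S1 := by rw [Real.mul_self_sqrt hS1nn]
  have hden : (0:ℝ) < 1 - γc^2 := by nlinarith
  have hS1le : S1 ≤ S2 / (1 - γc^2) := by
    rw [le_div_iff₀ hden]; nlinarith [hpyth, hS3le]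
  calc Real.sqrt S1 ≤ Real.sqrt (S2 / (1 - γc^2)) := Real.sqrt_le_sqrt hS1le
    _ = Real.sqrt S2 / Real.sqrt (1 - γc^2) := Real.sqrt_div' S2 hden.le ▸ by
        rw [Real.sqrt_div hS2nn]
    _ = (1 / Real.sqrt (1 - γc^2)) * Real.sqrt S2 := by ring
end

section
/- Under the assumptions of the projected-Bellman-equation fixed point lemma, the solution w_π satisfies ||w_π||_2 ≤ 2 / ((1−γ)·√(1−γ_c)·√λ_min). -/
open Matrix

private lemma wcs {N : ℕ} (κ : Fin N → ℝ) (hκ : ∀ i, 0 < κ i) (a b : Fin N → ℝ) :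
    ∑ i, κ i * (a i * b i)
      ≤ Real.sqrt (∑ i, κ i * (a i)^2) * Real.sqrt (∑ i, κ i * (b i)^2) := by
  have h := Real.sum_mul_le_sqrt_mul_sqrt Finset.univ
    (fun i => Real.sqrt (κ i) * a i) (fun i => Real.sqrt (κ i) * b i)
  have hk : ∀ i : Fin N, Real.sqrt (κ i) * Real.sqrt (κ i) = κ i := fun i =>
    Real.mul_self_sqrt (hκ i).le
  have e1 : ∀ i : Fin N, (Real.sqrt (κ i) * a i) * (Real.sqrt (κ i) * b i)
      = κ i * (a i * b i) := by intro i; linear_combination (a i * b i) * hk i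
  have e2 : ∀ i : Fin N, (Real.sqrt (κ i) * a i)^2 = κ i * (a i)^2 := by
    intro i; linear_combination (a i)^2 * hk i
  have e3 : ∀ i : Fin N, (Real.sqrt (κ i) * b i)^2 = κ i * (b i)^2 := by
    intro i; linear_combination (b i)^2 * hk i
  simp only [e1, e2, e3] at h
  exact h

private lemma wexpand {N : ℕ} (κ x y : Fin N → ℝ) :
    ∑ i, κ i * (x i + y i)^2
      = ∑ i, κ i * (x i)^2 + 2 * (∑ i, κ i * (x i * y i)) + ∑ i, κ i * (y i)^2 := by
  rw [Finset.mul_sum, ← Finset.sum_add_distrib, ← Finset.sum_add_distrib]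
  congr 1; ext i; ring

private lemma wtri {N : ℕ} (κ : Fin N → ℝ) (hκ : ∀ i, 0 < κ i) (x y : Fin N → ℝ) :
    Real.sqrt (∑ i, κ i * (x i + y i)^2)
      ≤ Real.sqrt (∑ i, κ i * (x i)^2) + Real.sqrt (∑ i, κ i * (y i)^2) := by
  have hx : (0:ℝ) ≤ ∑ i, κ i * (x i)^2 :=
    Finset.sum_nonneg fun i _ => mul_nonneg (hκ i).le (sq_nonneg _)
  have hy : (0:ℝ) ≤ ∑ i, κ i * (y i)^2 :=
    Finset.sum_nonneg fun i _ => mul_nonneg (hκ i).le (sq_nonneg _)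
  have hcs := wcs κ hκ x y
  have key : ∑ i, κ i * (x i + y i)^2
      ≤ (Real.sqrt (∑ i, κ i * (x i)^2) + Real.sqrt (∑ i, κ i * (y i)^2))^2 := by
    rw [wexpand]
    have sx := Real.sq_sqrt hx
    have sy := Real.sq_sqrt hy
    nlinarith [Real.sqrt_nonneg (∑ i, κ i * (x i)^2), Real.sqrt_nonneg (∑ i, κ i * (y i)^2)]
  calc Real.sqrt (∑ i, κ i * (x i + y i)^2)
      ≤ Real.sqrt ((Real.sqrt (∑ i, κ i * (x i)^2) + Real.sqrt (∑ i, κ i * (y i)^2))^2) :=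
        Real.sqrt_le_sqrt key
    _ = _ := Real.sqrt_sq (by positivity)

/-- Uniform bound on the projected Bellman equation solution:
`‖wπ‖₂ ≤ 2/((1−γ)√(1−γc)√λmin)`. -/
theorem stmt_9 (N d : ℕ) (Φ : Matrix (Fin N) (Fin d) ℝ)
    (κ : Fin N → ℝ) (hκpos : ∀ i, 0 < κ i) (hκsum : ∑ i, κ i = 1)
    (γ γc : ℝ) (hγ : γ ∈ Set.Ioo (0:ℝ) 1) (hγc : γc ∈ Set.Ioo (0:ℝ) 1)
    (Proj : (Fin N → ℝ) → (Fin N → ℝ))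
    (hProjRange : ∀ Q, ∃ u : Fin d → ℝ, Proj Q = Φ *ᵥ u)
    (hProjOrth : ∀ (Q : Fin N → ℝ) (v : Fin d → ℝ),
      ∑ i, κ i * (Q i - Proj Q i) * ((Φ *ᵥ v) i) = 0)
    (Tn : (Fin N → ℝ) → (Fin N → ℝ))
    (hContract : ∀ Q1 Q2 : Fin N → ℝ,
      Real.sqrt (∑ i, κ i * (Proj (Tn Q1) i - Proj (Tn Q2) i)^2)
        ≤ γc * Real.sqrt (∑ i, κ i * (Q1 i - Q2 i)^2))
    (Qπ : Fin N → ℝ) (hQnorm : Real.sqrt (∑ i, κ i * (Qπ i)^2) ≤ 1 / (1 - γ))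
    (hQfix : Tn Qπ = Qπ)
    (wπ : Fin d → ℝ) (hwπ : Φ *ᵥ wπ = Proj (Tn (Φ *ᵥ wπ)))
    (lmin : ℝ) (hlpos : 0 < lmin)
    (hlmin : ∀ v : Fin d → ℝ,
      lmin * ∑ k, (v k)^2 ≤ ∑ i, κ i * ((Φ *ᵥ v) i)^2) :
    Real.sqrt (∑ k, (wπ k)^2)
      ≤ 2 / ((1 - γ) * Real.sqrt (1 - γc) * Real.sqrt lmin) := by
  obtain ⟨hγ0, hγ1⟩ := hγ
  obtain ⟨hγc0, hγc1⟩ := hγc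
  obtain ⟨u, hu⟩ := hProjRange Qπ
  -- abbreviations
  set SQ := ∑ i, κ i * (Qπ i)^2 with hSQ
  have hSQnn : 0 ≤ SQ := Finset.sum_nonneg fun i _ => mul_nonneg (hκpos i).le (sq_nonneg _)
  set Se := ∑ i, κ i * (Qπ i - (Φ *ᵥ wπ) i)^2 with hSe
  have hSenn : 0 ≤ Se := Finset.sum_nonneg fun i _ => mul_nonneg (hκpos i).le (sq_nonneg _)
  set Sr := ∑ i, κ i * (Qπ i - Proj Qπ i)^2 with hSr
  have hSrnn : 0 ≤ Sr := Finset.sum_nonneg fun i _ => mul_nonneg (hκpos i).le (sq_nonneg _)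
  -- orthogonality cross terms
  have orth : ∀ v : Fin d → ℝ, ∑ i, κ i * ((Qπ i - Proj Qπ i) * ((Φ *ᵥ v) i)) = 0 := by
    intro v
    have := hProjOrth Qπ v
    simpa [mul_assoc] using this
  -- Pythagoras 1 : Se = Sr + S(ProjQπ - Φwπ)
  have pyth1 : Se = Sr + ∑ i, κ i * (Proj Qπ i - (Φ *ᵥ wπ) i)^2 := by
    have hdiff : ∀ i, Proj Qπ i - (Φ *ᵥ wπ) i = (Φ *ᵥ (u - wπ)) i := by
      intro i
      rw [Matrix.mulVec_sub, hu]
      simp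
    have hsplit : ∀ i, Qπ i - (Φ *ᵥ wπ) i
        = (Qπ i - Proj Qπ i) + (Φ *ᵥ (u - wπ)) i := by
      intro i; rw [← hdiff i]; ring
    calc Se = ∑ i, κ i * ((Qπ i - Proj Qπ i) + (Φ *ᵥ (u - wπ)) i)^2 := by
          rw [hSe]; exact Finset.sum_congr rfl fun i _ => by rw [hsplit i]
      _ = Sr + 2 * (∑ i, κ i * ((Qπ i - Proj Qπ i) * ((Φ *ᵥ (u - wπ)) i)))
            + ∑ i, κ i * ((Φ *ᵥ (u - wπ)) i)^2 := wexpand κ _ _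
      _ = Sr + ∑ i, κ i * ((Φ *ᵥ (u - wπ)) i)^2 := by rw [orth (u - wπ)]; ring
      _ = Sr + ∑ i, κ i * (Proj Qπ i - (Φ *ᵥ wπ) i)^2 := by
          congr 1; exact Finset.sum_congr rfl fun i _ => by rw [hdiff i]
  -- Pythagoras 2 : SQ = Sr + S(ProjQπ)  hence Sr ≤ SQ
  have hSrle : Sr ≤ SQ := by
    have hsplit : ∀ i, Qπ i = (Qπ i - Proj Qπ i) + (Φ *ᵥ u) i := by
      intro i; rw [← hu]; ring
    have hPnn : (0:ℝ) ≤ ∑ i, κ i * ((Φ *ᵥ u) i)^2 :=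
      Finset.sum_nonneg fun i _ => mul_nonneg (hκpos i).le (sq_nonneg _)
    have : SQ = Sr + 2 * (∑ i, κ i * ((Qπ i - Proj Qπ i) * ((Φ *ᵥ u) i)))
        + ∑ i, κ i * ((Φ *ᵥ u) i)^2 := by
      calc SQ = ∑ i, κ i * ((Qπ i - Proj Qπ i) + (Φ *ᵥ u) i)^2 := by
            rw [hSQ]; exact Finset.sum_congr rfl fun i _ => by rw [← hsplit i]
        _ = _ := wexpand κ _ _
    rw [this, orth u]
    linarith
  -- contraction bound on S(ProjQπ - Φwπ)
  have hcontr : ∑ i, κ i * (Proj Qπ i - (Φ *ᵥ wπ) i)^2 ≤ γc^2 * Se := by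
    have h := hContract Qπ (Φ *ᵥ wπ)
    rw [hQfix, ← hwπ] at h
    have hPnn : (0:ℝ) ≤ ∑ i, κ i * (Proj Qπ i - (Φ *ᵥ wπ) i)^2 :=
      Finset.sum_nonneg fun i _ => mul_nonneg (hκpos i).le (sq_nonneg _)
    have hsq : (Real.sqrt (∑ i, κ i * (Proj Qπ i - (Φ *ᵥ wπ) i)^2))^2
        ≤ (γc * Real.sqrt Se)^2 := by
      apply sq_le_sq' _ h
      have : 0 ≤ γc * Real.sqrt Se := mul_nonneg hγc0.le (Real.sqrt_nonneg _)
      linarith [Real.sqrt_nonneg (∑ i, κ i * (Proj Qπ i - (Φ *ᵥ wπ) i)^2)]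
    rw [Real.sq_sqrt hPnn, mul_pow, Real.sq_sqrt hSenn] at hsq
    exact hsq
  -- (1 - γc²) Se ≤ SQ
  have hkey : (1 - γc^2) * Se ≤ SQ := by nlinarith
  -- SQ ≤ (1/(1-γ))²
  have hSQle : SQ ≤ (1 / (1 - γ))^2 := by
    have := Real.sq_sqrt hSQnn
    nlinarith [Real.sqrt_nonneg SQ]
  -- bound sqrt Se
  have hγcsq : 1 - γc ≤ 1 - γc^2 := by nlinarith
  have h1γc : (0:ℝ) < 1 - γc := by linarith
  have h1γ : (0:ℝ) < 1 - γ := by linarith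
  have hSele : Se ≤ (1 / (1 - γ))^2 / (1 - γc) := by
    rw [le_div_iff₀ h1γc]
    nlinarith
  have hsqrtSe : Real.sqrt Se ≤ 1 / ((1 - γ) * Real.sqrt (1 - γc)) := by
    have : Real.sqrt Se ≤ Real.sqrt ((1 / (1 - γ))^2 / (1 - γc)) := Real.sqrt_le_sqrt hSele
    calc Real.sqrt Se ≤ Real.sqrt ((1 / (1 - γ))^2 / (1 - γc)) := this
      _ = Real.sqrt ((1 / (1 - γ))^2) / Real.sqrt (1 - γc) := Real.sqrt_div' _ h1γc.le ▸ by
          rw [Real.sqrt_div (by positivity)]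
      _ = (1 / (1 - γ)) / Real.sqrt (1 - γc) := by rw [Real.sqrt_sq (by positivity)]
      _ = 1 / ((1 - γ) * Real.sqrt (1 - γc)) := by rw [div_div]
  -- triangle: sqrt S(Φwπ) ≤ sqrt SQ + sqrt Se
  have htri : Real.sqrt (∑ i, κ i * ((Φ *ᵥ wπ) i)^2) ≤ Real.sqrt SQ + Real.sqrt Se := by
    have hsplit : ∀ i, (Φ *ᵥ wπ) i = Qπ i + (-(Qπ i - (Φ *ᵥ wπ) i)) := by intro i; ring
    have h := wtri κ hκpos Qπ (fun i => -(Qπ i - (Φ *ᵥ wπ) i))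
    have e1 : ∑ i, κ i * (Qπ i + (-(Qπ i - (Φ *ᵥ wπ) i)))^2 = ∑ i, κ i * ((Φ *ᵥ wπ) i)^2 :=
      Finset.sum_congr rfl fun i _ => by ring_nf
    have e2 : ∑ i, κ i * (-(Qπ i - (Φ *ᵥ wπ) i))^2 = Se :=
      Finset.sum_congr rfl fun i _ => by ring_nf
    rw [e1, e2] at h
    exact h
  -- lower bound via lmin
  have hlow : Real.sqrt lmin * Real.sqrt (∑ k, (wπ k)^2)
      ≤ Real.sqrt (∑ i, κ i * ((Φ *ᵥ wπ) i)^2) := by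
    rw [← Real.sqrt_mul hlpos.le]
    exact Real.sqrt_le_sqrt (hlmin wπ)
  -- combine
  have hB1 : Real.sqrt (1 - γc) ≤ 1 := Real.sqrt_le_one.mpr (by linarith)
  have hBpos : 0 < Real.sqrt (1 - γc) := Real.sqrt_pos.mpr h1γc
  have hSQb : Real.sqrt SQ ≤ 1 / ((1 - γ) * Real.sqrt (1 - γc)) := by
    calc Real.sqrt SQ ≤ 1 / (1 - γ) := hQnorm
      _ ≤ 1 / ((1 - γ) * Real.sqrt (1 - γc)) := by
          apply div_le_div_of_nonneg_left one_pos.le (by positivity)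
          calc (1 - γ) * Real.sqrt (1 - γc) ≤ (1 - γ) * 1 := by
                exact mul_le_mul_of_nonneg_left hB1 h1γ.le
            _ = 1 - γ := mul_one _
  have hmain : Real.sqrt lmin * Real.sqrt (∑ k, (wπ k)^2)
      ≤ 2 / ((1 - γ) * Real.sqrt (1 - γc)) := by
    calc Real.sqrt lmin * Real.sqrt (∑ k, (wπ k)^2)
        ≤ Real.sqrt (∑ i, κ i * ((Φ *ᵥ wπ) i)^2) := hlow
      _ ≤ Real.sqrt SQ + Real.sqrt Se := htri
      _ ≤ 1 / ((1 - γ) * Real.sqrt (1 - γc)) + 1 / ((1 - γ) * Real.sqrt (1 - γc)) :=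
          add_le_add hSQb hsqrtSe
      _ = 2 / ((1 - γ) * Real.sqrt (1 - γc)) := by ring
  have hLpos : 0 < Real.sqrt lmin := Real.sqrt_pos.mpr hlpos
  rw [← le_div_iff₀' hLpos] at hmain
  calc Real.sqrt (∑ k, (wπ k)^2)
      ≤ 2 / ((1 - γ) * Real.sqrt (1 - γc)) / Real.sqrt lmin := hmain
    _ = 2 / ((1 - γ) * Real.sqrt (1 - γc) * Real.sqrt lmin) := by rw [div_div]
end

section
/- Let {S_k} be a Markov chain on a finite state space that mixes geometrically: max_s ||P^k_{π_b}(s,·) − μ_b(·)||_TV ≤ Cσ^k for all k ≥ 0, with C > 0, σ ∈ (0,1). Then the augmented chain X_k = (S_k, A_k, …, S_{k+n}, A_{k+n}) generated under behavior policy π_b has a unique stationary distribution ν_b and satisfies max_x ||P^{k+n+1}(x,·) − ν_b(·)||_TV ≤ Cσ^k for all k ≥ 0. -/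
open Finset


variable {S A : Type} [Fintype S] [Fintype A] [DecidableEq S] [DecidableEq A]




def pw (P : S → A → S → ℝ) (πb : S → A → ℝ) (n : ℕ) (f : Fin (n+1) → S) (g : Fin (n+1) → A) : ℝ :=
  (∏ i : Fin n, πb (f i.castSucc) (g i.castSucc) * P (f i.castSucc) (g i.castSucc) (f i.succ)) *
    πb (f (Fin.last n)) (g (Fin.last n))

lemma pw_cons (P : S → A → S → ℝ) (πb : S → A → ℝ) (n : ℕ) (s : S) (a : A)
    (f : Fin (n+1) → S) (g : Fin (n+1) → A) :
    pw P πb (n+1) (Fin.cons (α := fun _ => S) s f) (Fin.cons a g) = (πb s a * P s a (f 0)) * pw P πb n f g := by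
  simp only [pw, Fin.prod_univ_succ, Fin.castSucc_zero, Fin.cons_zero, Fin.cons_succ,
    ← Fin.succ_castSucc, ← Fin.succ_last, Fin.cons_succ]
  ring

lemma pw_snoc (P : S → A → S → ℝ) (πb : S → A → ℝ) (n : ℕ) (t : S) (b : A)
    (f : Fin (n+1) → S) (g : Fin (n+1) → A) :
    pw P πb (n+1) (Fin.snoc f t) (Fin.snoc g b) =
      pw P πb n f g * P (f (Fin.last n)) (g (Fin.last n)) t * πb t b := by
  simp only [pw, Fin.prod_univ_castSucc, Fin.snoc_castSucc, Fin.succ_castSucc, Fin.snoc_last,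
    Fin.succ_last]
  ring

omit [Fintype S] [Fintype A] [DecidableEq S] [DecidableEq A] in
lemma pw_nonneg (P : S → A → S → ℝ) (πb : S → A → ℝ) (hP : ∀ s a s', 0 ≤ P s a s')
    (hπ : ∀ s a, 0 ≤ πb s a) (n : ℕ) (f : Fin (n+1) → S) (g : Fin (n+1) → A) :
    0 ≤ pw P πb n f g :=
  mul_nonneg (Finset.prod_nonneg fun i _ => mul_nonneg (hπ _ _) (hP _ _ _)) (hπ _ _)

lemma sum_pi_fin_succ {β M : Type} [Fintype β] [AddCommMonoid M] {n : ℕ}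
    (F : (Fin (n+1) → β) → M) :
    ∑ f, F f = ∑ s : β, ∑ f : Fin n → β, F (Fin.cons s f) := by
  rw [← Equiv.sum_comp (Fin.consEquiv (fun _ => β)) F, Fintype.sum_prod_type]
  rfl

lemma pw_sum (P : S → A → S → ℝ) (πb : S → A → ℝ)
    (hP : ∀ s a, ∑ s', P s a s' = 1) (hπ : ∀ s, ∑ a, πb s a = 1) :
    ∀ (n : ℕ) (φ : S → ℝ),
      (∑ f : Fin (n+1) → S, ∑ g : Fin (n+1) → A, φ (f 0) * pw P πb n f g) = ∑ s, φ s := by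
  intro n
  induction n with
  | zero =>
    intro φ
    rw [sum_pi_fin_succ]
    refine Finset.sum_congr rfl fun s _ => ?_
    have : ∀ f : Fin 0 → S, (∑ g : Fin 1 → A, φ ((Fin.cons (α := fun _ => S) s f) 0) * pw P πb 0 (Fin.cons (α := fun _ => S) s f) g)
        = φ s * ∑ a, πb s a := by
      intro f
      rw [sum_pi_fin_succ, Finset.mul_sum]
      refine Finset.sum_congr rfl fun a _ => ?_
      rw [Fintype.sum_unique]
      simp [pw, Fin.last_zero]
    rw [Fintype.sum_unique]  -- sum over f : Fin 0 → S
    rw [this, hπ, mul_one]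
  | succ n ih =>
    intro φ
    rw [sum_pi_fin_succ]
    have key : ∀ s : S,
        (∑ f : Fin (n+1) → S, ∑ g : Fin (n+2) → A,
          φ ((Fin.cons (α := fun _ => S) s f) 0) * pw P πb (n+1) (Fin.cons (α := fun _ => S) s f) g) = φ s := by
      intro s
      have step1 : ∀ f : Fin (n+1) → S,
          (∑ g : Fin (n+2) → A, φ ((Fin.cons (α := fun _ => S) s f) 0) * pw P πb (n+1) (Fin.cons (α := fun _ => S) s f) g)
          = ∑ a : A, ∑ g : Fin (n+1) → A, φ s * ((πb s a * P s a (f 0)) * pw P πb n f g) := by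
        intro f
        rw [sum_pi_fin_succ]
        simp only [pw_cons, Fin.cons_zero]
      rw [Finset.sum_congr rfl (fun f _ => step1 f), Finset.sum_comm]
      have step2 : ∀ a : A,
          (∑ f : Fin (n+1) → S, ∑ g : Fin (n+1) → A,
            φ s * ((πb s a * P s a (f 0)) * pw P πb n f g)) = φ s * πb s a := by
        intro a
        have hih := ih (fun t => P s a t)
        calc (∑ f : Fin (n+1) → S, ∑ g : Fin (n+1) → A,
              φ s * ((πb s a * P s a (f 0)) * pw P πb n f g))
            = φ s * πb s a * ∑ f : Fin (n+1) → S, ∑ g : Fin (n+1) → A,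
                P s a (f 0) * pw P πb n f g := by
              rw [Finset.mul_sum]
              refine Finset.sum_congr rfl fun f _ => ?_
              rw [Finset.mul_sum]
              refine Finset.sum_congr rfl fun g _ => ?_
              ring
          _ = φ s * πb s a := by rw [hih, hP, mul_one]
      rw [Finset.sum_congr rfl (fun a _ => step2 a), ← Finset.mul_sum, hπ, mul_one]
    rw [Finset.sum_congr rfl (fun s _ => key s)]





omit [Fintype S] [Fintype A] [DecidableEq S] [DecidableEq A] in
lemma app_mk_eq {α : Type} {n : ℕ} (f : Fin (n+1) → α) {m : ℕ} {h : m < n+1} {i : Fin (n+1)}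
    (hm : m = (i : ℕ)) : f ⟨m, h⟩ = f i := congrArg f (Fin.ext hm)

omit [Fintype S] [Fintype A] [DecidableEq S] [DecidableEq A] in
lemma app_mk_mk {α : Type} {n : ℕ} (f : Fin (n+1) → α) {m m' : ℕ} {h : m < n+1} {h' : m' < n+1}
    (hm : m = m') : f ⟨m, h⟩ = f ⟨m', h'⟩ := congrArg f (Fin.ext hm)

lemma mk_eq_zero' {n m : ℕ} {h : m < n + 1} (hm : m = 0) : (⟨m, h⟩ : Fin (n+1)) = 0 :=
  Fin.ext (by simp [hm])

lemma mk_eq_succ {n m : ℕ} {h : m < n + 1} (hm : m ≠ 0) (hm2 : m ≤ n) :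
    (⟨m, h⟩ : Fin (n+1)) = Fin.succ ⟨m - 1, by omega⟩ :=
  Fin.ext (by simp; omega)

omit [Fintype S] [Fintype A] [DecidableEq S] [DecidableEq A] in
lemma app_castSucc {α : Type} {n : ℕ} (f : Fin (n+1) → α) {m : ℕ} (h : m < n) {m' : ℕ}
    {h' : m' < n+1} (hm : m = m') : f ((⟨m, h⟩ : Fin n).castSucc) = f ⟨m', h'⟩ :=
  congrArg f (Fin.ext (by simpa using hm))

lemma last_eq_succ {n : ℕ} (hn : n ≠ 0) : Fin.last n = Fin.succ ⟨n - 1, by omega⟩ :=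
  Fin.ext (by simp; omega)

def Dker (P : S → A → S → ℝ) (πb : S → A → ℝ) (n j : ℕ)
    (x x' : (Fin (n+1) → S) × (Fin (n+1) → A)) : ℝ :=
  (if ∀ i : Fin (n+1), (i : ℕ) + j ≤ n →
      (x'.1 i = x.1 ⟨min ((i : ℕ) + j) n, Nat.lt_succ_of_le (Nat.min_le_right _ _)⟩ ∧
       x'.2 i = x.2 ⟨min ((i : ℕ) + j) n, Nat.lt_succ_of_le (Nat.min_le_right _ _)⟩)
    then (1:ℝ) else 0) *
  ∏ i : Fin (n+1),
    if n < (i : ℕ) + j then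
      P (if (i : ℕ) = 0 then x.1 (Fin.last n)
          else x'.1 ⟨min ((i : ℕ) - 1) n, Nat.lt_succ_of_le (Nat.min_le_right _ _)⟩)
        (if (i : ℕ) = 0 then x.2 (Fin.last n)
          else x'.2 ⟨min ((i : ℕ) - 1) n, Nat.lt_succ_of_le (Nat.min_le_right _ _)⟩)
        (x'.1 i) * πb (x'.1 i) (x'.2 i)
    else 1

omit [Fintype S] [Fintype A] in
lemma Dker_zero (P : S → A → S → ℝ) (πb : S → A → ℝ) (n : ℕ)
    (x x' : (Fin (n+1) → S) × (Fin (n+1) → A)) :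
    Dker P πb n 0 x x' = if x = x' then 1 else 0 := by
  unfold Dker
  rw [Finset.prod_eq_one (fun i _ => by rw [if_neg]; omega), mul_one]
  refine if_congr ?_ rfl rfl
  constructor
  · intro h
    ext i
    · have hi := i.isLt
      rw [(h i (by omega)).1]; exact (app_mk_eq x.1 (by omega)).symm
    · have hi := i.isLt
      rw [(h i (by omega)).2]; exact (app_mk_eq x.2 (by omega)).symm
  · rintro rfl i hi
    exact ⟨(app_mk_eq x.1 (by omega)).symm, (app_mk_eq x.2 (by omega)).symm⟩


lemma Dker_step (P : S → A → S → ℝ) (πb : S → A → ℝ) (n j : ℕ) (hj : j ≤ n)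
    (x x' : (Fin (n+1) → S) × (Fin (n+1) → A)) :
    (∑ s0 : S, ∑ a0 : A,
      Dker P πb n j x (Fin.cons s0 (Fin.init x'.1), Fin.cons a0 (Fin.init x'.2)) *
        (P (Fin.cons (α := fun _ => S) s0 (Fin.init x'.1) (Fin.last n))
           (Fin.cons (α := fun _ => A) a0 (Fin.init x'.2) (Fin.last n))
           (x'.1 (Fin.last n)) * πb (x'.1 (Fin.last n)) (x'.2 (Fin.last n))))
      = Dker P πb n (j+1) x x' := by
  classical
  set C1 : S := x.1 ⟨min (0 + j) n, Nat.lt_succ_of_le (Nat.min_le_right _ _)⟩ with hC1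
  set C2 : A := x.2 ⟨min (0 + j) n, Nat.lt_succ_of_le (Nat.min_le_right _ _)⟩ with hC2
  set REST : Prop := ∀ k : Fin n, (k : ℕ) + 1 + j ≤ n →
      (x'.1 k.castSucc = x.1 ⟨min ((k : ℕ) + 1 + j) n, Nat.lt_succ_of_le (Nat.min_le_right _ _)⟩ ∧
       x'.2 k.castSucc = x.2 ⟨min ((k : ℕ) + 1 + j) n, Nat.lt_succ_of_le (Nat.min_le_right _ _)⟩)
    with hREST
  set PRODY : S → A → ℝ := fun s0 a0 => ∏ k : Fin n,
      (if n < (k : ℕ) + 1 + j then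
        P (if (k : ℕ) = 0 then s0
            else x'.1 ⟨min ((k : ℕ) - 1) n, Nat.lt_succ_of_le (Nat.min_le_right _ _)⟩)
          (if (k : ℕ) = 0 then a0
            else x'.2 ⟨min ((k : ℕ) - 1) n, Nat.lt_succ_of_le (Nat.min_le_right _ _)⟩)
          (x'.1 k.castSucc) * πb (x'.1 k.castSucc) (x'.2 k.castSucc)
      else 1) with hPRODY
  set EX : S → A → ℝ := fun s0 a0 =>
      P (Fin.cons (α := fun _ => S) s0 (Fin.init x'.1) (Fin.last n))
        (Fin.cons (α := fun _ => A) a0 (Fin.init x'.2) (Fin.last n))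
        (x'.1 (Fin.last n)) * πb (x'.1 (Fin.last n)) (x'.2 (Fin.last n)) with hEX
  have hy : ∀ s0 a0,
      Dker P πb n j x (Fin.cons s0 (Fin.init x'.1), Fin.cons a0 (Fin.init x'.2)) =
        (if s0 = C1 ∧ a0 = C2 ∧ REST then (1:ℝ) else 0) * PRODY s0 a0 := by
    intro s0 a0
    unfold Dker
    congr 1
    · refine if_congr ?_ rfl rfl
      rw [Fin.forall_fin_succ]
      simp only [Fin.val_zero, Fin.val_succ, Fin.cons_zero, Fin.cons_succ, Fin.init]
      rw [imp_iff_right (by omega : 0 + j ≤ n)]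
      rw [hREST, hC1, hC2]
      tauto
    · rw [hPRODY, Fin.prod_univ_succ,
        if_neg (show ¬ n < ((0 : Fin (n+1)) : ℕ) + j by simp only [Fin.val_zero]; omega),
        one_mul]
      refine Finset.prod_congr rfl fun k _ => ?_
      simp only [Fin.val_succ, Fin.cons_succ, Fin.init]
      by_cases hkc : n < (k : ℕ) + 1 + j
      · rw [if_pos hkc, if_pos hkc, if_neg (show ¬ ((k:ℕ) + 1 = 0) by omega),
          if_neg (show ¬ ((k:ℕ) + 1 = 0) by omega)]
        have hkn := k.isLt
        by_cases hk0 : (k : ℕ) = 0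
        · rw [if_pos hk0, if_pos hk0]
          rw [mk_eq_zero' (by omega), Fin.cons_zero, Fin.cons_zero]
        · rw [if_neg hk0, if_neg hk0,
            mk_eq_succ (m := ((k:ℕ) + 1 - 1) ⊓ n) (by omega) (by omega),
            Fin.cons_succ, Fin.cons_succ]
          simp only [Fin.init]
          exact congrArg₂
            (fun u v => P u v (x'.1 k.castSucc) * πb (x'.1 k.castSucc) (x'.2 k.castSucc))
            (congrArg x'.1 (Fin.ext (by simp only [Fin.coe_castSucc, Fin.val_mk]; omega)))
            (congrArg x'.2 (Fin.ext (by simp only [Fin.coe_castSucc, Fin.val_mk]; omega)))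
      · rw [if_neg hkc, if_neg hkc]
  calc (∑ s0 : S, ∑ a0 : A,
      Dker P πb n j x (Fin.cons s0 (Fin.init x'.1), Fin.cons a0 (Fin.init x'.2)) *
        (P (Fin.cons (α := fun _ => S) s0 (Fin.init x'.1) (Fin.last n))
           (Fin.cons (α := fun _ => A) a0 (Fin.init x'.2) (Fin.last n))
           (x'.1 (Fin.last n)) * πb (x'.1 (Fin.last n)) (x'.2 (Fin.last n))))
      = ∑ s0 : S, ∑ a0 : A,
          (if s0 = C1 ∧ a0 = C2 ∧ REST then (1:ℝ) else 0) * PRODY s0 a0 * EX s0 a0 := by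
        refine Finset.sum_congr rfl fun s0 _ => Finset.sum_congr rfl fun a0 _ => ?_
        rw [hy s0 a0, hEX]
    _ = (if REST then PRODY C1 C2 * EX C1 C2 else 0) := by
        have hinner : ∀ s0 : S,
            (∑ a0 : A, (if s0 = C1 ∧ a0 = C2 ∧ REST then (1:ℝ) else 0) * PRODY s0 a0 * EX s0 a0)
            = if s0 = C1 then (if REST then PRODY C1 C2 * EX C1 C2 else 0) else 0 := by
          intro s0
          by_cases h1 : s0 = C1
          · rw [if_pos h1]
            have hterm : ∀ a0 : A,
                (if s0 = C1 ∧ a0 = C2 ∧ REST then (1:ℝ) else 0) * PRODY s0 a0 * EX s0 a0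
                = if a0 = C2 then (if REST then PRODY s0 C2 * EX s0 C2 else 0) else 0 := by
              intro a0
              by_cases h2 : a0 = C2
              · rw [h2, if_pos rfl]
                by_cases h3 : REST
                · rw [if_pos ⟨h1, rfl, h3⟩, if_pos h3, one_mul]
                · rw [if_neg (fun hc => h3 hc.2.2), if_neg h3, zero_mul, zero_mul]
              · rw [if_neg (fun hc => h2 hc.2.1), if_neg h2, zero_mul, zero_mul]
            rw [Finset.sum_congr rfl fun a0 _ => hterm a0, Finset.sum_ite_eq' Finset.univ C2,
              if_pos (Finset.mem_univ _), h1]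
          · rw [if_neg h1]
            refine Finset.sum_eq_zero fun a0 _ => ?_
            rw [if_neg (fun hc => h1 hc.1), zero_mul, zero_mul]
        rw [Finset.sum_congr rfl fun s0 _ => hinner s0, Finset.sum_ite_eq' Finset.univ C1,
          if_pos (Finset.mem_univ _)]
    _ = Dker P πb n (j+1) x x' := by
        unfold Dker
        have hcond : (∀ i : Fin (n+1), (i : ℕ) + (j+1) ≤ n →
            (x'.1 i = x.1 ⟨min ((i : ℕ) + (j+1)) n, Nat.lt_succ_of_le (Nat.min_le_right _ _)⟩ ∧
             x'.2 i = x.2 ⟨min ((i : ℕ) + (j+1)) n, Nat.lt_succ_of_le (Nat.min_le_right _ _)⟩))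
            ↔ REST := by
          rw [hREST]
          constructor
          · intro h k hk
            have hkn := k.isLt
            have h' := h k.castSucc (by simp only [Fin.coe_castSucc]; omega)
            refine ⟨h'.1.trans (app_mk_mk x.1 (by simp only [Fin.coe_castSucc, Fin.val_mk]; omega)),
              h'.2.trans (app_mk_mk x.2 (by simp only [Fin.coe_castSucc, Fin.val_mk]; omega))⟩
          · intro h i hi
            have hin := i.isLt
            have hilt : (i : ℕ) < n := by omega
            have h' := h ⟨(i:ℕ), hilt⟩ (by simp only [Fin.val_mk]; omega)
            have e1 : x'.1 ((⟨(i:ℕ), hilt⟩ : Fin n).castSucc) = x'.1 i :=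
              congrArg x'.1 (Fin.ext (by simp only [Fin.coe_castSucc, Fin.val_mk]))
            have e2 : x'.2 ((⟨(i:ℕ), hilt⟩ : Fin n).castSucc) = x'.2 i :=
              congrArg x'.2 (Fin.ext (by simp only [Fin.coe_castSucc, Fin.val_mk]))
            exact ⟨e1.symm.trans (h'.1.trans
                (app_mk_mk x.1 (by simp only [Fin.coe_castSucc, Fin.val_mk]; omega))),
              e2.symm.trans (h'.2.trans
                (app_mk_mk x.2 (by simp only [Fin.coe_castSucc, Fin.val_mk]; omega)))⟩
        have hprod : PRODY C1 C2 * EX C1 C2 =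
            ∏ i : Fin (n+1),
              if n < (i : ℕ) + (j+1) then
                P (if (i : ℕ) = 0 then x.1 (Fin.last n)
                    else x'.1 ⟨min ((i : ℕ) - 1) n, Nat.lt_succ_of_le (Nat.min_le_right _ _)⟩)
                  (if (i : ℕ) = 0 then x.2 (Fin.last n)
                    else x'.2 ⟨min ((i : ℕ) - 1) n, Nat.lt_succ_of_le (Nat.min_le_right _ _)⟩)
                  (x'.1 i) * πb (x'.1 i) (x'.2 i)
              else 1 := by
          rw [Fin.prod_univ_castSucc]
          congr 1
          · -- the first n factors
            rw [hPRODY]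
            refine Finset.prod_congr rfl fun k _ => ?_
            have hkn := k.isLt
            simp only [Fin.coe_castSucc]
            by_cases hkc : n < (k : ℕ) + 1 + j
            · rw [if_pos hkc, if_pos (show n < (k:ℕ) + (j+1) by omega)]
              by_cases hk0 : (k : ℕ) = 0
              · rw [if_pos hk0, if_pos hk0, if_pos hk0, if_pos hk0, hC1, hC2]
                exact congrArg₂
                  (fun u v => P u v (x'.1 k.castSucc) * πb (x'.1 k.castSucc) (x'.2 k.castSucc))
                  (congrArg x.1 (Fin.ext (by simp only [Fin.val_mk, Fin.val_last]; omega)))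
                  (congrArg x.2 (Fin.ext (by simp only [Fin.val_mk, Fin.val_last]; omega)))
              · rw [if_neg hk0, if_neg hk0, if_neg hk0, if_neg hk0]
            · rw [if_neg hkc, if_neg (show ¬ n < (k:ℕ) + (j+1) by omega)]
          · -- the last factor
            rw [hEX, if_pos (show n < ((Fin.last n : Fin (n+1)) : ℕ) + (j+1) by
                simp only [Fin.val_last]; omega)]
            simp only [Fin.val_last]
            by_cases hn : n = 0
            · rw [if_pos hn, if_pos hn]
              have e : Fin.last n = (0 : Fin (n+1)) :=
                Fin.ext (by simp only [Fin.val_last, Fin.val_zero]; omega)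
              rw [e, Fin.cons_zero, Fin.cons_zero, hC1, hC2]
              exact congrArg₂
                (fun u v => P u v (x'.1 0) * πb (x'.1 0) (x'.2 0))
                (congrArg x.1 (Fin.ext (by simp only [Fin.val_mk, Fin.val_zero]; omega)))
                (congrArg x.2 (Fin.ext (by simp only [Fin.val_mk, Fin.val_zero]; omega)))
            · rw [if_neg hn, if_neg hn]
              have l1 : Fin.last n = Fin.succ (⟨n - 1, by omega⟩ : Fin n) := last_eq_succ hn
              have m1 : Fin.init x'.1 ⟨n - 1, by omega⟩
                  = x'.1 ((⟨n - 1, by omega⟩ : Fin n).castSucc) := rfl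
              have m2 : Fin.init x'.2 ⟨n - 1, by omega⟩
                  = x'.2 ((⟨n - 1, by omega⟩ : Fin n).castSucc) := rfl
              have e1 : Fin.cons (α := fun _ => S) C1 (Fin.init x'.1) (Fin.last n)
                  = x'.1 ⟨(n-1) ⊓ n, Nat.lt_succ_of_le (Nat.min_le_right _ _)⟩ :=
                (((congrArg (Fin.cons (α := fun _ => S) C1 (Fin.init x'.1)) l1).trans
                  (Fin.cons_succ (α := fun _ : Fin (n+1) => S) C1 (Fin.init x'.1) ⟨n - 1, Nat.sub_lt (Nat.pos_of_ne_zero hn) one_pos⟩)).trans m1).trans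
                  (app_castSucc x'.1 (by omega) (show n - 1 = (n-1) ⊓ n by omega))
              have e2 : Fin.cons (α := fun _ => A) C2 (Fin.init x'.2) (Fin.last n)
                  = x'.2 ⟨(n-1) ⊓ n, Nat.lt_succ_of_le (Nat.min_le_right _ _)⟩ :=
                (((congrArg (Fin.cons (α := fun _ => A) C2 (Fin.init x'.2)) l1).trans
                  (Fin.cons_succ (α := fun _ : Fin (n+1) => A) C2 (Fin.init x'.2) ⟨n - 1, Nat.sub_lt (Nat.pos_of_ne_zero hn) one_pos⟩)).trans m2).trans
                  (app_castSucc x'.2 (by omega) (show n - 1 = (n-1) ⊓ n by omega))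
              exact congrArg₂
                (fun u v => P u v (x'.1 (Fin.last n)) *
                  πb (x'.1 (Fin.last n)) (x'.2 (Fin.last n))) e1 e2
        by_cases hR : REST
        · rw [if_pos hR, if_pos (hcond.mpr hR), one_mul, hprod]
        · rw [if_neg hR, if_neg (fun h => hR (hcond.mp h)), zero_mul]


omit [DecidableEq S] [DecidableEq A] in
lemma pw_eq (P : S → A → S → ℝ) (πb : S → A → ℝ) (n : ℕ) (f : Fin (n+1) → S)
    (g : Fin (n+1) → A) :
    pw P πb n f g = πb (f 0) (g 0) *
      ∏ k : Fin n, (P (f k.castSucc) (g k.castSucc) (f k.succ) * πb (f k.succ) (g k.succ)) := by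
  have h1 : (∏ i : Fin (n+1), πb (f i) (g i))
      = πb (f 0) (g 0) * ∏ k : Fin n, πb (f k.succ) (g k.succ) := Fin.prod_univ_succ _
  have h2 : (∏ i : Fin (n+1), πb (f i) (g i))
      = (∏ k : Fin n, πb (f k.castSucc) (g k.castSucc)) * πb (f (Fin.last n)) (g (Fin.last n)) :=
    Fin.prod_univ_castSucc _
  simp only [pw, Finset.prod_mul_distrib]
  linear_combination (∏ k : Fin n, P (f k.castSucc) (g k.castSucc) (f k.succ)) * (h1 - h2)

lemma Dker_top (P : S → A → S → ℝ) (πb : S → A → ℝ) (n : ℕ)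
    (x x' : (Fin (n+1) → S) × (Fin (n+1) → A)) :
    Dker P πb n (n+1) x x' =
      P (x.1 (Fin.last n)) (x.2 (Fin.last n)) (x'.1 0) * pw P πb n x'.1 x'.2 := by
  unfold Dker
  rw [if_pos (fun i hi => absurd hi (by omega)), one_mul]
  calc (∏ i : Fin (n+1), if n < (i:ℕ) + (n+1) then
          P (if (i:ℕ) = 0 then x.1 (Fin.last n)
              else x'.1 ⟨min ((i:ℕ)-1) n, Nat.lt_succ_of_le (Nat.min_le_right _ _)⟩)
            (if (i:ℕ) = 0 then x.2 (Fin.last n)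
              else x'.2 ⟨min ((i:ℕ)-1) n, Nat.lt_succ_of_le (Nat.min_le_right _ _)⟩)
            (x'.1 i) * πb (x'.1 i) (x'.2 i)
        else 1)
      = ∏ i : Fin (n+1),
          P (if (i:ℕ) = 0 then x.1 (Fin.last n)
              else x'.1 ⟨min ((i:ℕ)-1) n, Nat.lt_succ_of_le (Nat.min_le_right _ _)⟩)
            (if (i:ℕ) = 0 then x.2 (Fin.last n)
              else x'.2 ⟨min ((i:ℕ)-1) n, Nat.lt_succ_of_le (Nat.min_le_right _ _)⟩)
            (x'.1 i) * πb (x'.1 i) (x'.2 i) :=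
        Finset.prod_congr rfl (fun i _ => if_pos (by omega))
    _ = (P (x.1 (Fin.last n)) (x.2 (Fin.last n)) (x'.1 0) * πb (x'.1 0) (x'.2 0)) *
        ∏ k : Fin n, (P (x'.1 k.castSucc) (x'.2 k.castSucc) (x'.1 k.succ) *
          πb (x'.1 k.succ) (x'.2 k.succ)) := by
        rw [Fin.prod_univ_succ]
        congr 1
        exact Finset.prod_congr rfl fun k _ => by
          rw [if_neg (show ¬ (((k.succ : Fin (n+1))) : ℕ) = 0 by simp only [Fin.val_succ]; omega),
            if_neg (show ¬ (((k.succ : Fin (n+1))) : ℕ) = 0 by simp only [Fin.val_succ]; omega)]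
          exact congrArg₂
            (fun u v => P u v (x'.1 k.succ) * πb (x'.1 k.succ) (x'.2 k.succ))
            (app_mk_eq x'.1 (by simp only [Fin.val_succ, Fin.coe_castSucc]; omega))
            (app_mk_eq x'.2 (by simp only [Fin.val_succ, Fin.coe_castSucc]; omega))
    _ = P (x.1 (Fin.last n)) (x.2 (Fin.last n)) (x'.1 0) * pw P πb n x'.1 x'.2 := by
        rw [pw_eq]; ring



/-- Geometric mixing of the augmented chain `X_k = (S_k,A_k,…,S_{k+n},A_{k+n})`:
if the state chain under the behavior policy mixes geometrically towards `μ_b`,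
then the tuple chain has the unique stationary distribution `ν_b`, and
`max_x ‖P^{k+n+1}(x,·) − ν_b‖_TV ≤ C σ^k` for all `k ≥ 0`. -/
theorem stmt_10 (S A : Type) [Fintype S] [Fintype A] [DecidableEq S] [DecidableEq A]
    [Nonempty S] [Nonempty A] (n : ℕ)
    (P : S → A → S → ℝ) (hPnn : ∀ s a s', 0 ≤ P s a s')
    (hPsum : ∀ s a, ∑ s', P s a s' = 1)
    (πb : S → A → ℝ) (hπb : ∀ s a, 0 < πb s a) (hπbsum : ∀ s, ∑ a, πb s a = 1)
    (μb : S → ℝ) (hμnn : ∀ s, 0 ≤ μb s) (hμsum : ∑ s, μb s = 1)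
    (hμstat : ∀ s', ∑ s, μb s * ∑ a, πb s a * P s a s' = μb s')
    -- `Pk k` is the `k`-step transition kernel of the state chain under `π_b`:
    (Pk : ℕ → S → S → ℝ)
    (hPk0 : ∀ s s', Pk 0 s s' = if s = s' then 1 else 0)
    (hPkS : ∀ k s s', Pk (k+1) s s' = ∑ s'', Pk k s s'' * ∑ a, πb s'' a * P s'' a s')
    (C σ : ℝ) (hC : 0 < C) (hσ : σ ∈ Set.Ioo (0:ℝ) 1)
    -- geometric mixing of the state chain:
    (hmix : ∀ (k : ℕ) (s : S), (1/2) * ∑ s', |Pk k s s' - μb s'| ≤ C * σ^k)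
    -- `PX m` is the `m`-step transition kernel of the tuple chain:
    (PX : ℕ → ((Fin (n+1) → S) × (Fin (n+1) → A)) →
      ((Fin (n+1) → S) × (Fin (n+1) → A)) → ℝ)
    (hPX0 : ∀ x x', PX 0 x x' = if x = x' then 1 else 0)
    (hPX1 : ∀ x x', PX 1 x x' =
      if (∀ i : Fin n, x'.1 i.castSucc = x.1 i.succ ∧ x'.2 i.castSucc = x.2 i.succ)
      then P (x.1 (Fin.last n)) (x.2 (Fin.last n)) (x'.1 (Fin.last n)) *
             πb (x'.1 (Fin.last n)) (x'.2 (Fin.last n))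
      else 0)
    (hPXCK : ∀ m x x', PX (m+1) x x' = ∑ x'', PX m x x'' * PX 1 x'' x')
    (νb : ((Fin (n+1) → S) × (Fin (n+1) → A)) → ℝ)
    (hνb : ∀ x, νb x = μb (x.1 0) *
      (∏ i : Fin n, πb (x.1 i.castSucc) (x.2 i.castSucc) *
        P (x.1 i.castSucc) (x.2 i.castSucc) (x.1 i.succ)) *
      πb (x.1 (Fin.last n)) (x.2 (Fin.last n))) :
    -- `ν_b` is stationary for the tuple chain:
    (∀ x', ∑ x, νb x * PX 1 x x' = νb x') ∧
    -- and it is the unique stationary distribution: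
    (∀ ν : ((Fin (n+1) → S) × (Fin (n+1) → A)) → ℝ,
      (∀ x, 0 ≤ ν x) → (∑ x, ν x = 1) →
      (∀ x', ∑ x, ν x * PX 1 x x' = ν x') → ν = νb) ∧
    -- geometric mixing of the tuple chain:
    (∀ (k : ℕ) (x : (Fin (n+1) → S) × (Fin (n+1) → A)),
      (1/2) * ∑ x', |PX (k+n+1) x x' - νb x'| ≤ C * σ^k) := by
  classical
  obtain ⟨hσ0, hσ1⟩ := hσ
  have hπnn : ∀ s a, 0 ≤ πb s a := fun s a => (hπb s a).le
  have hνb' : ∀ x, νb x = μb (x.1 0) * pw P πb n x.1 x.2 := by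
    intro x; rw [hνb, pw]; ring
  -- basic facts about Pk
  have hPknn : ∀ k s s', 0 ≤ Pk k s s' := by
    intro k
    induction k with
    | zero => intro s s'; rw [hPk0]; split <;> norm_num
    | succ k ih =>
      intro s s'
      rw [hPkS]
      exact Finset.sum_nonneg fun s'' _ => mul_nonneg (ih _ _)
        (Finset.sum_nonneg fun a _ => mul_nonneg (hπnn _ _) (hPnn _ _ _))
  have hp1sum : ∀ s, (∑ s', ∑ a, πb s a * P s a s') = 1 := by
    intro s
    rw [Finset.sum_comm]
    calc (∑ a, ∑ s', πb s a * P s a s') = ∑ a, πb s a * ∑ s', P s a s' := by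
          exact Finset.sum_congr rfl fun a _ => (Finset.mul_sum _ _ _).symm
      _ = ∑ a, πb s a := Finset.sum_congr rfl fun a _ => by rw [hPsum, mul_one]
      _ = 1 := hπbsum s
  -- the key cons-decomposition of a sum against the one-step tuple kernel
  have hcons : ∀ (h : ((Fin (n+1) → S) × (Fin (n+1) → A)) → ℝ)
      (x' : (Fin (n+1) → S) × (Fin (n+1) → A)),
      (∑ x, h x * PX 1 x x') =
      ∑ s0 : S, ∑ a0 : A,
        h (Fin.cons s0 (Fin.init x'.1), Fin.cons a0 (Fin.init x'.2)) *
          (P (Fin.cons (α := fun _ => S) s0 (Fin.init x'.1) (Fin.last n))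
             (Fin.cons (α := fun _ => A) a0 (Fin.init x'.2) (Fin.last n))
             (x'.1 (Fin.last n)) * πb (x'.1 (Fin.last n)) (x'.2 (Fin.last n))) := by
    intro h x'
    rw [Fintype.sum_prod_type]
    rw [sum_pi_fin_succ (fun f : Fin (n+1) → S => ∑ g, h (f, g) * PX 1 (f, g) x')]
    refine Finset.sum_congr rfl fun s0 _ => ?_
    rw [Finset.sum_congr rfl (fun f' (_ : f' ∈ Finset.univ) =>
      sum_pi_fin_succ (fun g : Fin (n+1) → A =>
        h (Fin.cons s0 f', g) * PX 1 (Fin.cons s0 f', g) x'))]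
    rw [Finset.sum_comm]
    refine Finset.sum_congr rfl fun a0 _ => ?_
    have hterm : ∀ (f' : Fin n → S) (g' : Fin n → A),
        h (Fin.cons s0 f', Fin.cons a0 g') * PX 1 (Fin.cons s0 f', Fin.cons a0 g') x'
        = if f' = Fin.init x'.1 then
            (if g' = Fin.init x'.2 then
              h (Fin.cons s0 f', Fin.cons a0 g') *
                (P (Fin.cons (α := fun _ => S) s0 f' (Fin.last n))
                   (Fin.cons (α := fun _ => A) a0 g' (Fin.last n))
                   (x'.1 (Fin.last n)) * πb (x'.1 (Fin.last n)) (x'.2 (Fin.last n)))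
            else 0) else 0 := by
      intro f' g'
      rw [hPX1]
      by_cases h1 : f' = Fin.init x'.1
      · by_cases h2 : g' = Fin.init x'.2
        · rw [if_pos h1, if_pos h2,
            if_pos (fun i => ⟨by rw [h1]; rfl, by rw [h2]; rfl⟩)]
        · rw [if_neg (fun hc => h2 (funext fun i => ((hc i).2).symm)), mul_zero,
            if_pos h1, if_neg h2]
      · rw [if_neg (fun hc => h1 (funext fun i => ((hc i).1).symm)), mul_zero, if_neg h1]
    rw [Finset.sum_congr rfl (fun f' (_ : f' ∈ Finset.univ) =>
      Finset.sum_congr rfl (fun g' (_ : g' ∈ Finset.univ) => hterm f' g'))]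
    have hpull : ∀ f' : Fin n → S,
        (∑ g' : Fin n → A, if f' = Fin.init x'.1 then
            (if g' = Fin.init x'.2 then
              h (Fin.cons s0 f', Fin.cons a0 g') *
                (P (Fin.cons (α := fun _ => S) s0 f' (Fin.last n))
                   (Fin.cons (α := fun _ => A) a0 g' (Fin.last n))
                   (x'.1 (Fin.last n)) * πb (x'.1 (Fin.last n)) (x'.2 (Fin.last n)))
            else 0) else 0)
        = if f' = Fin.init x'.1 then
            h (Fin.cons s0 f', Fin.cons a0 (Fin.init x'.2)) *
              (P (Fin.cons (α := fun _ => S) s0 f' (Fin.last n))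
                 (Fin.cons (α := fun _ => A) a0 (Fin.init x'.2) (Fin.last n))
                 (x'.1 (Fin.last n)) * πb (x'.1 (Fin.last n)) (x'.2 (Fin.last n)))
          else 0 := by
      intro f'
      by_cases h1 : f' = Fin.init x'.1
      · rw [if_pos h1]
        rw [Finset.sum_congr rfl (fun g' (_ : g' ∈ Finset.univ) => if_pos h1),
          Finset.sum_ite_eq' Finset.univ (Fin.init x'.2), if_pos (Finset.mem_univ _)]
      · rw [if_neg h1]
        exact Finset.sum_eq_zero fun g' _ => if_neg h1
    rw [Finset.sum_congr rfl (fun f' (_ : f' ∈ Finset.univ) => hpull f'),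
      Finset.sum_ite_eq' Finset.univ (Fin.init x'.1), if_pos (Finset.mem_univ _)]
  -- j-step kernels for j ≤ n+1
  have claimG : ∀ j, j ≤ n + 1 → ∀ x x', PX j x x' = Dker P πb n j x x' := by
    intro j
    induction j with
    | zero => intro _ x x'; rw [hPX0, Dker_zero]
    | succ j ih =>
      intro hj x x'
      rw [hPXCK j x x',
        Finset.sum_congr rfl (fun x'' (_ : x'' ∈ Finset.univ) => by rw [ih (by omega) x x'']),
        hcons (fun x'' => Dker P πb n j x x'') x']
      exact Dker_step P πb n j (by omega) x x'
  -- the key product identity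
  have hkey : ∀ (x' : (Fin (n+1) → S) × (Fin (n+1) → A)) (s0 : S) (a0 : A),
      pw P πb n (Fin.cons s0 (Fin.init x'.1)) (Fin.cons a0 (Fin.init x'.2)) *
        (P (Fin.cons (α := fun _ => S) s0 (Fin.init x'.1) (Fin.last n))
           (Fin.cons (α := fun _ => A) a0 (Fin.init x'.2) (Fin.last n))
           (x'.1 (Fin.last n)) * πb (x'.1 (Fin.last n)) (x'.2 (Fin.last n))) =
      (πb s0 a0 * P s0 a0 (x'.1 0)) * pw P πb n x'.1 x'.2 := by
    intro x' s0 a0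
    have h1 := pw_snoc P πb n (x'.1 (Fin.last n)) (x'.2 (Fin.last n))
      (Fin.cons s0 (Fin.init x'.1)) (Fin.cons a0 (Fin.init x'.2))
    have h2 : Fin.snoc (Fin.cons s0 (Fin.init x'.1)) (x'.1 (Fin.last n))
        = Fin.cons (α := fun _ => S) s0 x'.1 := by
      rw [← Fin.cons_snoc_eq_snoc_cons, Fin.snoc_init_self]
    have h3 : Fin.snoc (Fin.cons a0 (Fin.init x'.2)) (x'.2 (Fin.last n))
        = Fin.cons (α := fun _ => A) a0 x'.2 := by
      rw [← Fin.cons_snoc_eq_snoc_cons, Fin.snoc_init_self]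
    rw [h2, h3] at h1
    rw [← mul_assoc, ← h1, pw_cons]
  -- the (m + n + 1)-step kernel
  have claimA : ∀ m x x', PX (m + (n+1)) x x' =
      (∑ s, P (x.1 (Fin.last n)) (x.2 (Fin.last n)) s * Pk m s (x'.1 0)) *
        pw P πb n x'.1 x'.2 := by
    intro m
    induction m with
    | zero =>
      intro x x'
      rw [show (0 + (n+1)) = n + 1 by omega, claimG (n+1) le_rfl, Dker_top]
      rw [Finset.sum_congr rfl (fun s (_ : s ∈ Finset.univ) => by
          rw [hPk0, mul_ite, mul_one, mul_zero]),
        Finset.sum_ite_eq' Finset.univ (x'.1 0), if_pos (Finset.mem_univ _)]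
    | succ m ih =>
      intro x x'
      rw [show (m + 1 + (n+1)) = (m + (n+1)) + 1 by omega, hPXCK,
        Finset.sum_congr rfl (fun x'' (_ : x'' ∈ Finset.univ) => by rw [ih x x'']),
        hcons (fun x'' =>
          (∑ s, P (x.1 (Fin.last n)) (x.2 (Fin.last n)) s * Pk m s (x''.1 0)) *
            pw P πb n x''.1 x''.2) x']
      simp only [Fin.cons_zero]
      have hterm : ∀ s0 a0,
          (∑ s, P (x.1 (Fin.last n)) (x.2 (Fin.last n)) s * Pk m s s0) *
            pw P πb n (Fin.cons s0 (Fin.init x'.1)) (Fin.cons a0 (Fin.init x'.2)) *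
            (P (Fin.cons (α := fun _ => S) s0 (Fin.init x'.1) (Fin.last n))
               (Fin.cons (α := fun _ => A) a0 (Fin.init x'.2) (Fin.last n))
               (x'.1 (Fin.last n)) * πb (x'.1 (Fin.last n)) (x'.2 (Fin.last n)))
          = ((∑ s, P (x.1 (Fin.last n)) (x.2 (Fin.last n)) s * Pk m s s0) *
              (πb s0 a0 * P s0 a0 (x'.1 0))) * pw P πb n x'.1 x'.2 := by
        intro s0 a0
        rw [mul_assoc, hkey x' s0 a0]
        ring
      rw [Finset.sum_congr rfl (fun s0 (_ : s0 ∈ Finset.univ) =>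
        Finset.sum_congr rfl (fun a0 (_ : a0 ∈ Finset.univ) => hterm s0 a0))]
      have hflat : (∑ s0 : S, ∑ a0 : A,
          ((∑ s, P (x.1 (Fin.last n)) (x.2 (Fin.last n)) s * Pk m s s0) *
            (πb s0 a0 * P s0 a0 (x'.1 0))) * pw P πb n x'.1 x'.2)
          = (∑ s0 : S, (∑ s, P (x.1 (Fin.last n)) (x.2 (Fin.last n)) s * Pk m s s0) *
              (∑ a0, πb s0 a0 * P s0 a0 (x'.1 0))) * pw P πb n x'.1 x'.2 := by
        rw [Finset.sum_mul]
        refine Finset.sum_congr rfl fun s0 _ => ?_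
        rw [Finset.mul_sum, Finset.sum_mul]
      rw [hflat]
      congr 1
      calc (∑ s0 : S, (∑ s, P (x.1 (Fin.last n)) (x.2 (Fin.last n)) s * Pk m s s0) *
              (∑ a0, πb s0 a0 * P s0 a0 (x'.1 0)))
          = ∑ s0 : S, ∑ s, P (x.1 (Fin.last n)) (x.2 (Fin.last n)) s *
              (Pk m s s0 * (∑ a0, πb s0 a0 * P s0 a0 (x'.1 0))) := by
            refine Finset.sum_congr rfl fun s0 _ => ?_
            rw [Finset.sum_mul]
            exact Finset.sum_congr rfl fun s _ => by ring
        _ = ∑ s, P (x.1 (Fin.last n)) (x.2 (Fin.last n)) s *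
              ∑ s0, Pk m s s0 * (∑ a0, πb s0 a0 * P s0 a0 (x'.1 0)) := by
            rw [Finset.sum_comm]
            exact Finset.sum_congr rfl fun s _ => (Finset.mul_sum _ _ _).symm
        _ = ∑ s, P (x.1 (Fin.last n)) (x.2 (Fin.last n)) s * Pk (m+1) s (x'.1 0) := by
            exact Finset.sum_congr rfl fun s _ => by rw [hPkS]
  -- geometric mixing of the tuple chain
  have hmixX : ∀ (k : ℕ) (x : (Fin (n+1) → S) × (Fin (n+1) → A)),
      (1/2) * ∑ x', |PX (k+n+1) x x' - νb x'| ≤ C * σ^k := by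
    intro k x
    have hdiff : ∀ x' : (Fin (n+1) → S) × (Fin (n+1) → A),
        |PX (k+n+1) x x' - νb x'| =
          |(∑ s, P (x.1 (Fin.last n)) (x.2 (Fin.last n)) s * Pk k s (x'.1 0)) - μb (x'.1 0)| *
            pw P πb n x'.1 x'.2 := by
      intro x'
      rw [show k + n + 1 = k + (n+1) by omega, claimA k x x', hνb' x', ← sub_mul, abs_mul,
        abs_of_nonneg (pw_nonneg P πb hPnn hπnn n x'.1 x'.2)]
    rw [Finset.sum_congr rfl (fun x' (_ : x' ∈ Finset.univ) => hdiff x')]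
    rw [Fintype.sum_prod_type]
    simp only []
    rw [pw_sum P πb hPsum hπbsum n (fun t =>
      |(∑ s, P (x.1 (Fin.last n)) (x.2 (Fin.last n)) s * Pk k s t) - μb t|)]
    have hptw : ∀ t, |(∑ s, P (x.1 (Fin.last n)) (x.2 (Fin.last n)) s * Pk k s t) - μb t|
        ≤ ∑ s, P (x.1 (Fin.last n)) (x.2 (Fin.last n)) s * |Pk k s t - μb t| := by
      intro t
      have e1 : (∑ s, P (x.1 (Fin.last n)) (x.2 (Fin.last n)) s * Pk k s t) - μb t
          = ∑ s, P (x.1 (Fin.last n)) (x.2 (Fin.last n)) s * (Pk k s t - μb t) := by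
        rw [Finset.sum_congr rfl (fun s (_ : s ∈ Finset.univ) => mul_sub
          (P (x.1 (Fin.last n)) (x.2 (Fin.last n)) s) (Pk k s t) (μb t)),
          Finset.sum_sub_distrib, ← Finset.sum_mul, hPsum, one_mul]
      rw [e1]
      refine (Finset.abs_sum_le_sum_abs _ _).trans (le_of_eq ?_)
      exact Finset.sum_congr rfl fun s _ => by rw [abs_mul, abs_of_nonneg (hPnn _ _ _)]
    calc (1/2) * ∑ t, |(∑ s, P (x.1 (Fin.last n)) (x.2 (Fin.last n)) s * Pk k s t) - μb t|
        ≤ (1/2) * ∑ t, ∑ s, P (x.1 (Fin.last n)) (x.2 (Fin.last n)) s * |Pk k s t - μb t| := by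
          refine mul_le_mul_of_nonneg_left (Finset.sum_le_sum fun t _ => hptw t) (by norm_num)
      _ = ∑ s, P (x.1 (Fin.last n)) (x.2 (Fin.last n)) s * ((1/2) * ∑ t, |Pk k s t - μb t|) := by
          rw [Finset.sum_comm, Finset.mul_sum]
          refine Finset.sum_congr rfl fun s _ => ?_
          rw [Finset.mul_sum, Finset.mul_sum, Finset.mul_sum]
          exact Finset.sum_congr rfl fun t _ => by ring
      _ ≤ ∑ s, P (x.1 (Fin.last n)) (x.2 (Fin.last n)) s * (C * σ^k) :=
          Finset.sum_le_sum fun s _ => mul_le_mul_of_nonneg_left (hmix k s) (hPnn _ _ _)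
      _ = C * σ^k := by rw [← Finset.sum_mul, hPsum, one_mul]
  -- stationarity of νb
  have hstat : ∀ x', ∑ x, νb x * PX 1 x x' = νb x' := by
    intro x'
    rw [hcons νb x']
    have hterm : ∀ s0 a0,
        νb (Fin.cons s0 (Fin.init x'.1), Fin.cons a0 (Fin.init x'.2)) *
          (P (Fin.cons (α := fun _ => S) s0 (Fin.init x'.1) (Fin.last n))
             (Fin.cons (α := fun _ => A) a0 (Fin.init x'.2) (Fin.last n))
             (x'.1 (Fin.last n)) * πb (x'.1 (Fin.last n)) (x'.2 (Fin.last n)))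
        = (μb s0 * (πb s0 a0 * P s0 a0 (x'.1 0))) * pw P πb n x'.1 x'.2 := by
      intro s0 a0
      rw [hνb' (Fin.cons s0 (Fin.init x'.1), Fin.cons a0 (Fin.init x'.2))]
      rw [mul_assoc, hkey x' s0 a0]
      simp only [Fin.cons_zero]
      ring
    rw [Finset.sum_congr rfl (fun s0 (_ : s0 ∈ Finset.univ) =>
      Finset.sum_congr rfl (fun a0 (_ : a0 ∈ Finset.univ) => hterm s0 a0))]
    rw [hνb' x']
    calc (∑ s0 : S, ∑ a0 : A, (μb s0 * (πb s0 a0 * P s0 a0 (x'.1 0))) * pw P πb n x'.1 x'.2)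
        = (∑ s0 : S, μb s0 * ∑ a0, πb s0 a0 * P s0 a0 (x'.1 0)) * pw P πb n x'.1 x'.2 := by
          rw [Finset.sum_mul]
          refine Finset.sum_congr rfl fun s0 _ => ?_
          rw [Finset.mul_sum, Finset.sum_mul]
      _ = μb (x'.1 0) * pw P πb n x'.1 x'.2 := by rw [hμstat]
  refine ⟨hstat, ?_, hmixX⟩
  -- uniqueness
  intro ν hνnn hνsum hνstat
  have hstatm : ∀ m x', ∑ x, ν x * PX m x x' = ν x' := by
    intro m
    induction m with
    | zero =>
      intro x'
      rw [Finset.sum_congr rfl (fun x (_ : x ∈ Finset.univ) => by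
        rw [hPX0, mul_ite, mul_one, mul_zero]),
        Finset.sum_ite_eq' Finset.univ x', if_pos (Finset.mem_univ _)]
    | succ m ih =>
      intro x'
      calc (∑ x, ν x * PX (m+1) x x')
          = ∑ x, ∑ x'', ν x * PX m x x'' * PX 1 x'' x' := by
            refine Finset.sum_congr rfl fun x _ => ?_
            rw [hPXCK, Finset.mul_sum]
            exact Finset.sum_congr rfl fun x'' _ => (mul_assoc _ _ _).symm
        _ = ∑ x'', (∑ x, ν x * PX m x x'') * PX 1 x'' x' := by
            rw [Finset.sum_comm]
            exact Finset.sum_congr rfl fun x'' _ => (Finset.sum_mul _ _ _).symm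
        _ = ∑ x'', ν x'' * PX 1 x'' x' :=
            Finset.sum_congr rfl fun x'' _ => by rw [ih x'']
        _ = ν x' := hνstat x'
  have hbound : ∀ (k : ℕ) (x' : (Fin (n+1) → S) × (Fin (n+1) → A)),
      |ν x' - νb x'| ≤ 2 * (C * σ^k) := by
    intro k x'
    have hptw : ∀ x, |PX (k+n+1) x x' - νb x'| ≤ 2 * (C * σ^k) := by
      intro x
      have h1 : |PX (k+n+1) x x' - νb x'| ≤ ∑ y, |PX (k+n+1) x y - νb y| :=
        Finset.single_le_sum (f := fun y => |PX (k+n+1) x y - νb y|)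
          (fun y _ => abs_nonneg _) (Finset.mem_univ x')
      have h2 := hmixX k x
      nlinarith [h1, h2]
    have h3 : ν x' - νb x' = ∑ x, ν x * (PX (k+n+1) x x' - νb x') := by
      rw [Finset.sum_congr rfl (fun x (_ : x ∈ Finset.univ) =>
        mul_sub (ν x) (PX (k+n+1) x x') (νb x')), Finset.sum_sub_distrib,
        hstatm (k+n+1) x', ← Finset.sum_mul, hνsum, one_mul]
    rw [h3]
    refine (Finset.abs_sum_le_sum_abs _ _).trans ?_
    calc (∑ x, |ν x * (PX (k+n+1) x x' - νb x')|)
        ≤ ∑ x, ν x * (2 * (C * σ^k)) := by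
          refine Finset.sum_le_sum fun x _ => ?_
          rw [abs_mul, abs_of_nonneg (hνnn x)]
          exact mul_le_mul_of_nonneg_left (hptw x) (hνnn x)
      _ = 2 * (C * σ^k) := by rw [← Finset.sum_mul, hνsum, one_mul]
  funext x'
  have hk : |ν x' - νb x'| ≤ 0 := by
    have htend : Filter.Tendsto (fun k : ℕ => 2 * (C * σ^k)) Filter.atTop (nhds 0) := by
      have := (tendsto_pow_atTop_nhds_zero_of_lt_one hσ0.le hσ1).const_mul (2 * C)
      simpa [mul_assoc] using this
    exact ge_of_tendsto' htend (fun k => hbound k x')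
  have := abs_nonpos_iff.mp hk
  linarith [sub_eq_zero.mp this]
end

section
/- Performance difference lemma: for any two policies π, π' on a finite discounted MDP and any starting distribution μ, V^{π'}(μ) − V^{π}(μ) = (1/(1−γ))·E_{s∼d^{π'}_μ} Σ_a π'(a|s)·A^π(s,a), where A^π(s,a) = Q^π(s,a) − V^π(s) and d^{π'}_μ(s) = (1−γ)·E_{s_0∼μ}[Σ_{t≥0} γ^t Pr^{π'}(S_t = s | S_0 = s_0)]. -/
open Finset

/-- A finite discounted MDP with rewards bounded by 1. -/
structure MDP (S A : Type) [Fintype S] [Fintype A] where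
  P : S → A → S → ℝ
  R : S → A → ℝ
  γ : ℝ
  P_nonneg : ∀ s a s', 0 ≤ P s a s'
  P_sum : ∀ s a, ∑ s', P s a s' = 1
  R_bound : ∀ s a, |R s a| ≤ 1
  γ_pos : 0 < γ
  γ_lt_one : γ < 1

/-- `π` is a (stationary, randomized) policy. -/
def IsPolicy {S A : Type} [Fintype S] [Fintype A] (π : S → A → ℝ) : Prop :=
  (∀ s a, 0 ≤ π s a) ∧ ∀ s, ∑ a, π s a = 1

/-- `Q` is the state-action value function of `π`, characterized by the
Bellman equation. -/
def IsQ {S A : Type} [Fintype S] [Fintype A] (M : MDP S A)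
    (π : S → A → ℝ) (Q : S → A → ℝ) : Prop :=
  ∀ s a, Q s a = M.R s a + M.γ * ∑ s', M.P s a s' * ∑ a', π s' a' * Q s' a'

/-- The state value function induced by policy `π` and state-action values `Q`. -/
def Vval {S A : Type} [Fintype S] [Fintype A] (π : S → A → ℝ)
    (Q : S → A → ℝ) (s : S) : ℝ :=
  ∑ a, π s a * Q s a

/-- `t`-step transition probabilities of the state chain induced by policy `π`. -/
def prS {S A : Type} [Fintype S] [Fintype A] [DecidableEq S] (M : MDP S A)
    (π : S → A → ℝ) : ℕ → S → S → ℝ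
  | 0 => fun s0 s => if s0 = s then 1 else 0
  | (t+1) => fun s0 s => ∑ s'', prS M π t s0 s'' * ∑ a, π s'' a * M.P s'' a s

/-- Discounted state visitation distribution `d^π_μ`. -/
noncomputable def dvisit {S A : Type} [Fintype S] [Fintype A] [DecidableEq S]
    (M : MDP S A) (π : S → A → ℝ) (μ : S → ℝ) (s : S) : ℝ :=
  (1 - M.γ) * ∑ s0, μ s0 * ∑' t : ℕ, M.γ^t * prS M π t s0 s

section Aux

variable {S A : Type} [Fintype S] [Fintype A] [DecidableEq S]

lemma prS_nonneg (M : MDP S A) (π : S → A → ℝ) (hπ : IsPolicy π) (t : ℕ) :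
    ∀ s0 s, 0 ≤ prS M π t s0 s := by
  induction t with
  | zero =>
    intro s0 s
    simp only [prS]
    split <;> norm_num
  | succ t ih =>
    intro s0 s
    simp only [prS]
    exact Finset.sum_nonneg fun s'' _ => mul_nonneg (ih _ _)
      (Finset.sum_nonneg fun a _ => mul_nonneg (hπ.1 _ _) (M.P_nonneg _ _ _))

lemma prS_rowsum (M : MDP S A) (π : S → A → ℝ) (hπ : IsPolicy π) (t : ℕ) :
    ∀ s0, ∑ s, prS M π t s0 s = 1 := by
  induction t with
  | zero => intro s0; simp [prS]
  | succ t ih =>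
    intro s0
    simp only [prS]
    rw [Finset.sum_comm]
    have h : ∀ s'' : S, ∑ s, prS M π t s0 s'' * ∑ a, π s'' a * M.P s'' a s
        = prS M π t s0 s'' := by
      intro s''
      rw [← Finset.mul_sum, Finset.sum_comm]
      simp_rw [← Finset.mul_sum, M.P_sum, mul_one]
      rw [hπ.2 s'', mul_one]
    simp_rw [h]
    exact ih s0

lemma prS_le_one (M : MDP S A) (π : S → A → ℝ) (hπ : IsPolicy π) (t : ℕ) (s0 s : S) :
    prS M π t s0 s ≤ 1 :=
  calc prS M π t s0 s ≤ ∑ s', prS M π t s0 s' :=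
        Finset.single_le_sum (fun s' _ => prS_nonneg M π hπ t s0 s') (Finset.mem_univ s)
    _ = 1 := prS_rowsum M π hπ t s0

lemma prS_succ_left (M : MDP S A) (π : S → A → ℝ) (t : ℕ) :
    ∀ s0 s, prS M π (t+1) s0 s
      = ∑ s1, (∑ a, π s0 a * M.P s0 a s1) * prS M π t s1 s := by
  induction t with
  | zero =>
    intro s0 s
    simp [prS, Finset.sum_ite_eq, Finset.sum_ite_eq', mul_comm]
  | succ t ih =>
    intro s0 s
    show ∑ s'', prS M π (t+1) s0 s'' * ∑ a, π s'' a * M.P s'' a s = _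
    conv_lhs =>
      rw [Finset.sum_congr rfl fun s'' _ => by rw [ih s0 s'', Finset.sum_mul]]
    rw [Finset.sum_comm]
    refine Finset.sum_congr rfl fun s1 _ => ?_
    rw [show prS M π (t+1) s1 s = ∑ s'', prS M π t s1 s'' * ∑ a, π s'' a * M.P s'' a s
        from rfl, Finset.mul_sum]
    exact Finset.sum_congr rfl fun s'' _ => by ring

end Aux

section Aux2

set_option linter.unusedSectionVars false
set_option linter.unusedVariables false

variable {S A : Type} [Fintype S] [Fintype A] [DecidableEq S]

/-- advantage-expectation function -/
def gfun (π π' : S → A → ℝ) (Q : S → A → ℝ) (s : S) : ℝ :=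
  ∑ a, π' s a * (Q s a - Vval π Q s)

/-- state transition kernel of policy `ρ` -/
def P2 (M : MDP S A) (ρ : S → A → ℝ) (s0 s1 : S) : ℝ := ∑ a, ρ s0 a * M.P s0 a s1

lemma P2_nonneg (M : MDP S A) (ρ : S → A → ℝ) (hρ : IsPolicy ρ) (s0 s1 : S) :
    0 ≤ P2 M ρ s0 s1 :=
  Finset.sum_nonneg fun a _ => mul_nonneg (hρ.1 _ _) (M.P_nonneg _ _ _)

lemma P2_rowsum (M : MDP S A) (ρ : S → A → ℝ) (hρ : IsPolicy ρ) (s0 : S) :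
    ∑ s1, P2 M ρ s0 s1 = 1 := by
  unfold P2
  rw [Finset.sum_comm]
  simp_rw [← Finset.mul_sum, M.P_sum, mul_one]
  exact hρ.2 s0

lemma bellman_mix (M : MDP S A) (π ρ : S → A → ℝ) (Q : S → A → ℝ)
    (hQ : IsQ M π Q) (s0 : S) :
    ∑ a, ρ s0 a * Q s0 a
      = (∑ a, ρ s0 a * M.R s0 a)
        + M.γ * ∑ s1, P2 M ρ s0 s1 * Vval π Q s1 := by
  have h : ∀ a, ρ s0 a * Q s0 a
      = ρ s0 a * M.R s0 a + ∑ s', M.γ * (ρ s0 a * M.P s0 a s' * Vval π Q s') := by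
    intro a
    rw [show Q s0 a = M.R s0 a + M.γ * ∑ s', M.P s0 a s' * Vval π Q s' from hQ s0 a]
    rw [mul_add, Finset.mul_sum, Finset.mul_sum]
    exact congrArg _ (Finset.sum_congr rfl fun s' _ => by ring)
  simp_rw [h, Finset.sum_add_distrib]
  congr 1
  rw [Finset.sum_comm, Finset.mul_sum]
  refine Finset.sum_congr rfl fun s1 _ => ?_
  rw [show M.γ * (P2 M ρ s0 s1 * Vval π Q s1)
      = M.γ * ((∑ a, ρ s0 a * M.P s0 a s1) * Vval π Q s1) from rfl, Finset.sum_mul,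
    Finset.mul_sum]

end Aux2

section Main

set_option linter.unusedSectionVars false
set_option linter.unusedVariables false
set_option maxHeartbeats 1000000

variable {S A : Type} [Fintype S] [Fintype A] [DecidableEq S]

/-- discounted future advantage value -/
noncomputable def Ffun (M : MDP S A) (π π' : S → A → ℝ) (Q : S → A → ℝ) (s0 : S) : ℝ :=
  ∑' t : ℕ, M.γ^t * ∑ s, prS M π' t s0 s * gfun π π' Q s

lemma abs_inner_le (M : MDP S A) (π π' : S → A → ℝ) (hπ' : IsPolicy π')
    (Q : S → A → ℝ) (t : ℕ) (s0 : S) :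
    |∑ s, prS M π' t s0 s * gfun π π' Q s| ≤ ∑ s, |gfun π π' Q s| := by
  refine (Finset.abs_sum_le_sum_abs _ _).trans (Finset.sum_le_sum fun s _ => ?_)
  rw [abs_mul, abs_of_nonneg (prS_nonneg M π' hπ' t s0 s)]
  calc prS M π' t s0 s * |gfun π π' Q s| ≤ 1 * |gfun π π' Q s| :=
        mul_le_mul_of_nonneg_right (prS_le_one M π' hπ' t s0 s) (abs_nonneg _)
    _ = |gfun π π' Q s| := one_mul _

lemma summable_main (M : MDP S A) (π π' : S → A → ℝ) (hπ' : IsPolicy π')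
    (Q : S → A → ℝ) (s0 : S) :
    Summable (fun t : ℕ => M.γ^t * ∑ s, prS M π' t s0 s * gfun π π' Q s) := by
  have hγ0 : (0:ℝ) ≤ M.γ := le_of_lt M.γ_pos
  refine Summable.of_norm_bounded (g := fun t => M.γ^t * ∑ s, |gfun π π' Q s|)
    ((summable_geometric_of_lt_one hγ0 M.γ_lt_one).mul_right _) fun t => ?_
  rw [Real.norm_eq_abs, abs_mul, abs_pow, abs_of_nonneg hγ0]
  exact mul_le_mul_of_nonneg_left (abs_inner_le M π π' hπ' Q t s0) (pow_nonneg hγ0 t)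

lemma summable_prS (M : MDP S A) (π' : S → A → ℝ) (hπ' : IsPolicy π') (s0 s : S) :
    Summable (fun t : ℕ => M.γ^t * prS M π' t s0 s) := by
  have hγ0 : (0:ℝ) ≤ M.γ := le_of_lt M.γ_pos
  refine Summable.of_norm_bounded (g := fun t => M.γ^t)
    (summable_geometric_of_lt_one hγ0 M.γ_lt_one) fun t => ?_
  rw [Real.norm_eq_abs, abs_mul, abs_pow, abs_of_nonneg hγ0,
    abs_of_nonneg (prS_nonneg M π' hπ' t s0 s)]
  calc M.γ^t * prS M π' t s0 s ≤ M.γ^t * 1 :=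
        mul_le_mul_of_nonneg_left (prS_le_one M π' hπ' t s0 s) (pow_nonneg hγ0 t)
    _ = M.γ^t := mul_one _

lemma Ffun_fix (M : MDP S A) (π π' : S → A → ℝ) (hπ' : IsPolicy π')
    (Q : S → A → ℝ) (s0 : S) :
    Ffun M π π' Q s0
      = gfun π π' Q s0 + M.γ * ∑ s1, P2 M π' s0 s1 * Ffun M π π' Q s1 := by
  have hsplit := Summable.tsum_eq_zero_add (summable_main M π π' hπ' Q s0)
  rw [show Ffun M π π' Q s0
      = ∑' t : ℕ, M.γ^t * ∑ s, prS M π' t s0 s * gfun π π' Q s from rfl, hsplit]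
  congr 1
  · simp [prS]
  · have hmul : ∀ (c : ℝ) (f : S → ℝ), c * ∑ s_, f s_ = ∑ s_, c * f s_ :=
      fun c f => Finset.mul_sum _ _ _
    have ht : ∀ t : ℕ, M.γ^(t+1) * ∑ s, prS M π' (t+1) s0 s * gfun π π' Q s
        = ∑ s1, M.γ * (P2 M π' s0 s1 *
            (M.γ^t * ∑ s, prS M π' t s1 s * gfun π π' Q s)) := by
      intro t
      rw [Finset.mul_sum]
      conv_lhs => rw [Finset.sum_congr rfl fun s_ _ => by
        rw [prS_succ_left M π' t s0 s_, Finset.sum_mul, Finset.mul_sum]]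
      rw [Finset.sum_comm]
      refine Finset.sum_congr rfl fun s1 _ => ?_
      rw [show P2 M π' s0 s1 = ∑ a, π' s0 a * M.P s0 a s1 from rfl]
      rw [hmul, hmul, hmul]
      exact Finset.sum_congr rfl fun s_ _ => by ring
    simp_rw [ht]
    rw [Summable.tsum_finsetSum (fun s1 _ =>
      (((summable_main M π π' hπ' Q s1).mul_left (P2 M π' s0 s1)).mul_left M.γ))]
    rw [Finset.mul_sum]
    exact Finset.sum_congr rfl fun s1 _ => by
      rw [tsum_mul_left, tsum_mul_left]
      rfl

lemma VD_fix (M : MDP S A) (π π' : S → A → ℝ) (hπ : IsPolicy π) (hπ' : IsPolicy π')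
    (Q Q' : S → A → ℝ) (hQ : IsQ M π Q) (hQ' : IsQ M π' Q') (s0 : S) :
    Vval π' Q' s0 - Vval π Q s0
      = gfun π π' Q s0
        + M.γ * ∑ s1, P2 M π' s0 s1 * (Vval π' Q' s1 - Vval π Q s1) := by
  have hg : gfun π π' Q s0 = (∑ a, π' s0 a * Q s0 a) - Vval π Q s0 := by
    unfold gfun
    simp_rw [mul_sub]
    rw [Finset.sum_sub_distrib, ← Finset.sum_mul, hπ'.2 s0, one_mul]
  have h1 := bellman_mix M π' π' Q' hQ' s0
  have h2 := bellman_mix M π π' Q hQ s0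
  rw [hg, h2, show Vval π' Q' s0 = ∑ a, π' s0 a * Q' s0 a from rfl, h1]
  simp_rw [mul_sub, Finset.sum_sub_distrib, mul_sub]
  ring

lemma pointwise (M : MDP S A) (π π' : S → A → ℝ) (hπ : IsPolicy π) (hπ' : IsPolicy π')
    (Q Q' : S → A → ℝ) (hQ : IsQ M π Q) (hQ' : IsQ M π' Q') (s0 : S) :
    Vval π' Q' s0 - Vval π Q s0 = Ffun M π π' Q s0 := by
  have hγ0 : (0:ℝ) ≤ M.γ := le_of_lt M.γ_pos
  set D : S → ℝ := fun s => (Vval π' Q' s - Vval π Q s) - Ffun M π π' Q s with hDdef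
  have hD : ∀ s0, D s0 = M.γ * ∑ s1, P2 M π' s0 s1 * D s1 := by
    intro s0
    rw [hDdef]
    simp only
    rw [VD_fix M π π' hπ hπ' Q Q' hQ hQ' s0, Ffun_fix M π π' hπ' Q s0]
    simp_rw [mul_sub, Finset.sum_sub_distrib, mul_sub]
    ring
  have hBn : ∀ n : ℕ, ∀ s, |D s| ≤ M.γ^n * ∑ s', |D s'| := by
    intro n
    induction n with
    | zero =>
      intro s
      rw [pow_zero, one_mul]
      exact Finset.single_le_sum (fun s' _ => abs_nonneg (D s')) (Finset.mem_univ s)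
    | succ n ih =>
      intro s
      rw [hD s, abs_mul, abs_of_nonneg hγ0]
      calc M.γ * |∑ s1, P2 M π' s s1 * D s1|
          ≤ M.γ * ∑ s1, P2 M π' s s1 * |D s1| := by
            refine mul_le_mul_of_nonneg_left ((Finset.abs_sum_le_sum_abs _ _).trans
              (le_of_eq (Finset.sum_congr rfl fun s1 _ => ?_))) hγ0
            rw [abs_mul, abs_of_nonneg (P2_nonneg M π' hπ' s s1)]
        _ ≤ M.γ * ∑ s1, P2 M π' s s1 * (M.γ^n * ∑ s', |D s'|) :=
            mul_le_mul_of_nonneg_left (Finset.sum_le_sum fun s1 _ =>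
              mul_le_mul_of_nonneg_left (ih s1) (P2_nonneg M π' hπ' s s1)) hγ0
        _ = M.γ^(n+1) * ∑ s', |D s'| := by
            rw [← Finset.sum_mul, P2_rowsum M π' hπ' s]
            ring
  have hlim : Filter.Tendsto (fun n : ℕ => M.γ^n * ∑ s', |D s'|)
      Filter.atTop (nhds 0) := by
    have h := tendsto_pow_atTop_nhds_zero_of_lt_one hγ0 M.γ_lt_one
    simpa using h.mul_const (∑ s', |D s'|)
  have hle : |D s0| ≤ 0 := ge_of_tendsto' hlim (fun n => hBn n s0)
  have : D s0 = 0 := abs_eq_zero.mp (le_antisymm hle (abs_nonneg _))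
  have := this
  rw [hDdef] at this
  simpa [sub_eq_zero] using this

end Main

/-- Performance difference lemma:
`V^{π'}(μ) − V^{π}(μ) = (1/(1−γ))·E_{s∼d^{π'}_μ} Σ_a π'(a|s) A^π(s,a)`. -/
theorem stmt_11 {S A : Type} [Fintype S] [Fintype A] [DecidableEq S]
    (M : MDP S A) (π π' : S → A → ℝ) (hπ : IsPolicy π) (hπ' : IsPolicy π')
    (Q Q' : S → A → ℝ) (hQ : IsQ M π Q) (hQ' : IsQ M π' Q')
    (μ : S → ℝ) (hμnn : ∀ s, 0 ≤ μ s) (hμsum : ∑ s, μ s = 1) :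
    (∑ s, μ s * Vval π' Q' s) - (∑ s, μ s * Vval π Q s) =
      (1 / (1 - M.γ)) *
        ∑ s, dvisit M π' μ s * ∑ a, π' s a * (Q s a - Vval π Q s) := by
  have hne : (1:ℝ) - M.γ ≠ 0 := by
    have := M.γ_lt_one; linarith
  have hLHS : (∑ s, μ s * Vval π' Q' s) - (∑ s, μ s * Vval π Q s)
      = ∑ s0, μ s0 * Ffun M π π' Q s0 := by
    rw [← Finset.sum_sub_distrib]
    exact Finset.sum_congr rfl fun s0 _ => by
      rw [← mul_sub, pointwise M π π' hπ hπ' Q Q' hQ hQ' s0]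
  rw [hLHS]
  have hRHS : ∀ s : S, dvisit M π' μ s * ∑ a, π' s a * (Q s a - Vval π Q s)
      = (1 - M.γ) * ∑ s0, μ s0 * ((∑' t : ℕ, M.γ^t * prS M π' t s0 s) * gfun π π' Q s) := by
    intro s
    rw [show (∑ a, π' s a * (Q s a - Vval π Q s)) = gfun π π' Q s from rfl]
    unfold dvisit
    rw [mul_assoc, Finset.sum_mul]
    exact congrArg _ (Finset.sum_congr rfl fun s0 _ => by ring)
  simp_rw [hRHS]
  rw [← Finset.mul_sum, ← mul_assoc, one_div, inv_mul_cancel₀ hne, one_mul]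
  rw [Finset.sum_comm]
  refine Finset.sum_congr rfl fun s0 _ => ?_
  have hswap : ∑ s, μ s0 * ((∑' t : ℕ, M.γ^t * prS M π' t s0 s) * gfun π π' Q s)
      = μ s0 * ∑ s, ∑' t : ℕ, (M.γ^t * prS M π' t s0 s) * gfun π π' Q s := by
    rw [Finset.mul_sum]
    exact Finset.sum_congr rfl fun s _ => by rw [tsum_mul_right]
  rw [hswap, ← Summable.tsum_finsetSum (fun s _ => (summable_prS M π' hπ' s0 s).mul_right (gfun π π' Q s))]
  congr 1
  rw [show Ffun M π π' Q s0
      = ∑' t : ℕ, M.γ^t * ∑ s, prS M π' t s0 s * gfun π π' Q s from rfl]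
  refine tsum_congr fun t => ?_
  rw [Finset.mul_sum]
  exact Finset.sum_congr rfl fun s _ => by ring
end

section
/- Optimality-gap decomposition for NPG: with the update π_{t+1}(a|s) = π_t(a|s)exp(β(w^⊤φ(s,a) − V^{π_t}(s)))/Z_t(s), for any starting distribution μ: V^{π*}(μ) − V^{π_t}(μ) = (1/(1−γ))·E_{s∼d*} Σ_a π*(a|s)(Q^{π_t}(s,a) − w^⊤φ(s,a)) + (1/((1−γ)β))·E_{s∼d*} log Z_t(s) + (1/((1−γ)β))·E_{s∼d*}[D_KL(π*(·|s)||π_t(·|s)) − D_KL(π*(·|s)||π_{t+1}(·|s))], where d* = d^{π*}_μ. -/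
open Finset

/-- Auxiliary sum-swap identity. -/
lemma sum_swap_aux {I J : Type} [Fintype I] [Fintype J] (u : I → ℝ) (v : I → J → ℝ)
    (c : ℝ) (x : J → ℝ) :
    ∑ i, u i * (c * ∑ j, v i j * x j) = c * ∑ j, (∑ i, u i * v i j) * x j := by
  calc ∑ i, u i * (c * ∑ j, v i j * x j)
      = ∑ i, ∑ j, u i * (c * (v i j * x j)) := by
        refine Finset.sum_congr rfl fun i _ => ?_
        rw [Finset.mul_sum, Finset.mul_sum]
    _ = ∑ j, ∑ i, u i * (c * (v i j * x j)) := Finset.sum_comm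
    _ = c * ∑ j, (∑ i, u i * v i j) * x j := by
        rw [Finset.mul_sum]
        refine Finset.sum_congr rfl fun j _ => ?_
        rw [Finset.sum_mul, Finset.mul_sum]
        exact Finset.sum_congr rfl fun i _ => by ring

/-- Optimality-gap decomposition for the NPG update. -/
theorem stmt_14 {S A : Type} [Fintype S] [Fintype A] [DecidableEq S]
    (M : MDP S A) (d : ℕ) (φ : S → A → Fin d → ℝ) (w : Fin d → ℝ)
    (β : ℝ) (hβ : 0 < β)
    (πt πt1 : S → A → ℝ) (hπt : IsPolicy πt) (hπt1 : IsPolicy πt1)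
    (hπtpos : ∀ s a, 0 < πt s a)
    (Qt : S → A → ℝ) (hQt : IsQ M πt Qt)
    (Z : S → ℝ)
    (hZ : ∀ s, Z s = ∑ a', πt s a' *
      Real.exp (β * ((∑ i, w i * φ s a' i) - Vval πt Qt s)))
    (hUpd : ∀ s a, πt1 s a = πt s a *
      Real.exp (β * ((∑ i, w i * φ s a i) - Vval πt Qt s)) / Z s)
    (πstar : S → A → ℝ) (hπstar : IsPolicy πstar)
    (Qstar : S → A → ℝ) (hQstar : IsQ M πstar Qstar)
    (hOpt : ∀ (π : S → A → ℝ) (Q : S → A → ℝ), IsPolicy π → IsQ M π Q →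
      ∀ s, Vval π Q s ≤ Vval πstar Qstar s)
    (μ : S → ℝ) (hμnn : ∀ s, 0 ≤ μ s) (hμsum : ∑ s, μ s = 1) :
    (∑ s, μ s * Vval πstar Qstar s) - (∑ s, μ s * Vval πt Qt s) =
      (1 / (1 - M.γ)) * ∑ s, dvisit M πstar μ s *
          ∑ a, πstar s a * (Qt s a - ∑ i, w i * φ s a i)
      + (1 / ((1 - M.γ) * β)) * ∑ s, dvisit M πstar μ s * Real.log (Z s)
      + (1 / ((1 - M.γ) * β)) * ∑ s, dvisit M πstar μ s *
          ((∑ a, πstar s a * Real.log (πstar s a / πt s a))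
            - ∑ a, πstar s a * Real.log (πstar s a / πt1 s a)) := by
  classical
  rcases isEmpty_or_nonempty S with hS | hS
  · simp
  have hA : Nonempty A := by
    obtain ⟨s⟩ := hS
    by_contra h
    rw [not_nonempty_iff] at h
    have := hπt.2 s
    simp [Finset.univ_eq_empty] at this
  obtain ⟨hπsnn, hπssum⟩ := hπstar
  have hγ0 := M.γ_pos
  have hγ1 := M.γ_lt_one
  have h1γ : (0:ℝ) < 1 - M.γ := by linarith
  set γ := M.γ with hγdef
  set Vt : S → ℝ := Vval πt Qt with hVtdef
  set g : S → ℝ := fun s => ∑ a, πstar s a * (Qt s a - Vt s) with hg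
  set f : S → ℝ := fun s => Vval πstar Qstar s - Vt s with hf
  -- basic prS facts
  have hprS_nn : ∀ t s0 s, 0 ≤ prS M πstar t s0 s := by
    intro t
    induction t with
    | zero => intro s0 s; dsimp [prS]; split <;> norm_num
    | succ t ih =>
      intro s0 s
      exact Finset.sum_nonneg fun s'' _ => mul_nonneg (ih _ _)
        (Finset.sum_nonneg fun a _ => mul_nonneg (hπsnn _ _) (M.P_nonneg _ _ _))
  have hprS_sum : ∀ t s0, ∑ s, prS M πstar t s0 s = 1 := by
    intro t
    induction t with
    | zero => intro s0; simp [prS]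
    | succ t ih =>
      intro s0
      dsimp [prS]
      rw [Finset.sum_comm]
      have key : ∀ s'', ∑ s, prS M πstar t s0 s'' * ∑ a, πstar s'' a * M.P s'' a s
          = prS M πstar t s0 s'' := by
        intro s''
        rw [← Finset.mul_sum, Finset.sum_comm]
        simp_rw [← Finset.mul_sum, M.P_sum, mul_one]
        rw [hπssum, mul_one]
      simp_rw [key]
      exact ih s0
  have hprS_le : ∀ t s0 s, prS M πstar t s0 s ≤ 1 := by
    intro t s0 s
    calc prS M πstar t s0 s ≤ ∑ s', prS M πstar t s0 s' :=
          Finset.single_le_sum (fun s' _ => hprS_nn t s0 s') (Finset.mem_univ s)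
      _ = 1 := hprS_sum t s0
  -- Bellman-type recursion for f
  have hrec : ∀ s, f s = g s + γ * ∑ s', (∑ a, πstar s a * M.P s a s') * f s' := by
    intro s
    have hgz : g s = (∑ a, πstar s a * Qt s a) - Vt s := by
      simp only [hg, mul_sub, Finset.sum_sub_distrib, ← Finset.sum_mul, hπssum s, one_mul]
    have hfz : f s = (∑ a, πstar s a * Qstar s a) - Vt s := rfl
    have hd : ∑ a, πstar s a * Qstar s a - ∑ a, πstar s a * Qt s a
        = γ * ∑ s', (∑ a, πstar s a * M.P s a s') * f s' := by
      rw [← Finset.sum_sub_distrib]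
      simp_rw [← mul_sub]
      have hQ : ∀ a, Qstar s a - Qt s a = γ * ∑ s', M.P s a s' * f s' := by
        intro a
        rw [hQstar s a, hQt s a]
        have : ∀ s', M.P s a s' * f s'
            = M.P s a s' * (∑ a', πstar s' a' * Qstar s' a')
              - M.P s a s' * (∑ a', πt s' a' * Qt s' a') := by
          intro s'
          simp only [hf, hVtdef, Vval]
          ring
        simp_rw [this, Finset.sum_sub_distrib]
        ring
      simp_rw [hQ]
      exact sum_swap_aux _ _ _ _
    rw [hfz, hgz]
    linarith [hd]
  -- finite-horizon expansion
  have hstep : ∀ (N : ℕ) (s0 : S), f s0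
      = (∑ t ∈ Finset.range N, γ^t * ∑ s, prS M πstar t s0 s * g s)
        + γ^N * ∑ s, prS M πstar N s0 s * f s := by
    intro N
    induction N with
    | zero => intro s0; simp [prS, ite_mul]
    | succ N ih =>
      intro s0
      have hR : ∑ s, prS M πstar N s0 s * f s
          = (∑ s, prS M πstar N s0 s * g s)
            + γ * ∑ s', prS M πstar (N+1) s0 s' * f s' := by
        calc ∑ s, prS M πstar N s0 s * f s
            = ∑ s, prS M πstar N s0 s *
                (g s + γ * ∑ s', (∑ a, πstar s a * M.P s a s') * f s') :=
              Finset.sum_congr rfl fun s _ => by rw [← hrec s]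
          _ = (∑ s, prS M πstar N s0 s * g s)
              + γ * ∑ s', prS M πstar (N+1) s0 s' * f s' := by
              simp_rw [mul_add, Finset.sum_add_distrib]
              congr 1
              show (∑ s, prS M πstar N s0 s *
                  (γ * ∑ s', (∑ a, πstar s a * M.P s a s') * f s'))
                = γ * ∑ s', prS M πstar (N+1) s0 s' * f s'
              dsimp only [prS]
              exact sum_swap_aux _ _ _ _
      rw [Finset.sum_range_succ]
      rw [ih s0, hR]
      ring
  -- remainder tends to zero
  have hrem : ∀ s0 : S, Filter.Tendsto
      (fun N => γ^N * ∑ s, prS M πstar N s0 s * f s) Filter.atTop (nhds 0) := by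
    intro s0
    have hb : ∀ N : ℕ, ‖γ^N * ∑ s, prS M πstar N s0 s * f s‖ ≤ (∑ s, |f s|) * γ^N := by
      intro N
      rw [Real.norm_eq_abs, abs_mul, abs_pow, abs_of_pos hγ0, mul_comm]
      refine mul_le_mul_of_nonneg_right ?_ (pow_nonneg hγ0.le N)
      calc |∑ s, prS M πstar N s0 s * f s| ≤ ∑ s, |prS M πstar N s0 s * f s| :=
            Finset.abs_sum_le_sum_abs _ _
        _ ≤ ∑ s, |f s| := by
            apply Finset.sum_le_sum
            intro s _
            rw [abs_mul, abs_of_nonneg (hprS_nn N s0 s)]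
            exact mul_le_of_le_one_left (abs_nonneg _) (hprS_le N s0 s)
    have ht : Filter.Tendsto (fun N : ℕ => (∑ s, |f s|) * γ^N) Filter.atTop (nhds 0) := by
      have := (tendsto_pow_atTop_nhds_zero_of_lt_one (le_of_lt hγ0) hγ1).const_mul
        (∑ s, |f s|)
      simpa using this
    exact squeeze_zero_norm hb ht
  -- summability
  have hsum_g : ∀ s0 : S, Summable
      (fun t : ℕ => γ^t * ∑ s, prS M πstar t s0 s * g s) := by
    intro s0
    refine Summable.of_norm_bounded
      ((summable_geometric_of_lt_one (le_of_lt hγ0) hγ1).mul_left (∑ s, |g s|)) fun t => ?_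
    rw [Real.norm_eq_abs, abs_mul, abs_pow, abs_of_pos hγ0, mul_comm]
    refine mul_le_mul_of_nonneg_right ?_ (pow_nonneg hγ0.le t)
    calc |∑ s, prS M πstar t s0 s * g s| ≤ ∑ s, |prS M πstar t s0 s * g s| :=
          Finset.abs_sum_le_sum_abs _ _
      _ ≤ ∑ s, |g s| := by
          apply Finset.sum_le_sum
          intro s _
          rw [abs_mul, abs_of_nonneg (hprS_nn t s0 s)]
          exact mul_le_of_le_one_left (abs_nonneg _) (hprS_le t s0 s)
  have hsum1 : ∀ (s0 s : S), Summable (fun t : ℕ => γ^t * prS M πstar t s0 s) := by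
    intro s0 s
    refine Summable.of_nonneg_of_le
      (fun t => mul_nonneg (pow_nonneg (le_of_lt hγ0) t) (hprS_nn t s0 s))
      (fun t => ?_) (summable_geometric_of_lt_one (le_of_lt hγ0) hγ1)
    calc γ^t * prS M πstar t s0 s ≤ γ^t * 1 := by
          gcongr; exact hprS_le t s0 s
      _ = γ^t := mul_one _
  -- the tsum identity
  have hfsum : ∀ s0 : S, ∑' t : ℕ, γ^t * ∑ s, prS M πstar t s0 s * g s = f s0 := by
    intro s0
    have h1 := (hsum_g s0).hasSum.tendsto_sum_nat
    have h2 : Filter.Tendsto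
        (fun N => ∑ t ∈ Finset.range N, γ^t * ∑ s, prS M πstar t s0 s * g s)
        Filter.atTop (nhds (f s0)) := by
      have heq : (fun N => ∑ t ∈ Finset.range N, γ^t * ∑ s, prS M πstar t s0 s * g s)
          = fun N => f s0 - γ^N * ∑ s, prS M πstar N s0 s * f s := by
        funext N
        linarith [hstep N s0]
      rw [heq]
      simpa using (hrem s0).const_sub (f s0)
    exact tendsto_nhds_unique h1 h2
  -- main performance-difference identity
  have hmain : (1/(1-γ)) * ∑ s, dvisit M πstar μ s * g s = ∑ s0, μ s0 * f s0 := by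
    unfold dvisit
    rw [← hγdef]
    have e1 : ∀ s, ((1-γ) * ∑ s0, μ s0 * ∑' t : ℕ, γ^t * prS M πstar t s0 s) * g s
        = (1-γ) * ((∑ s0, μ s0 * ∑' t : ℕ, γ^t * prS M πstar t s0 s) * g s) :=
      fun s => mul_assoc _ _ _
    simp_rw [e1]
    rw [← Finset.mul_sum, ← mul_assoc, one_div_mul_cancel h1γ.ne', one_mul]
    have e2 : ∀ s, (∑ s0, μ s0 * ∑' t : ℕ, γ^t * prS M πstar t s0 s) * g s
        = ∑ s0, μ s0 * ((∑' t : ℕ, γ^t * prS M πstar t s0 s) * g s) := by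
      intro s
      rw [Finset.sum_mul]
      congr 1
      funext s0
      ring
    simp_rw [e2]
    rw [Finset.sum_comm]
    congr 1
    funext s0
    rw [← Finset.mul_sum]
    congr 1
    have e3 : ∀ s, (∑' t : ℕ, γ^t * prS M πstar t s0 s) * g s
        = ∑' t : ℕ, γ^t * prS M πstar t s0 s * g s := fun s => tsum_mul_right.symm
    simp_rw [e3]
    rw [← Summable.tsum_finsetSum (fun s _ => (hsum1 s0 s).mul_right (g s)), ← hfsum s0]
    refine tsum_congr fun t => ?_
    rw [Finset.mul_sum]
    exact Finset.sum_congr rfl fun s _ => by ring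
  -- positivity of Z
  have hZpos : ∀ s, 0 < Z s := by
    intro s
    rw [hZ s]
    exact Finset.sum_pos (fun a _ => mul_pos (hπtpos s a) (Real.exp_pos _))
      Finset.univ_nonempty
  -- log of the update
  have hlog1 : ∀ s a, Real.log (πt1 s a)
      = Real.log (πt s a) + β * ((∑ i, w i * φ s a i) - Vt s) - Real.log (Z s) := by
    intro s a
    rw [hUpd s a, Real.log_div (mul_pos (hπtpos s a) (Real.exp_pos _)).ne' (hZpos s).ne',
      Real.log_mul (hπtpos s a).ne' (Real.exp_pos _).ne', Real.log_exp]
  -- per-action KL identity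
  have hKLa : ∀ s a, πstar s a * Real.log (πstar s a / πt s a)
      - πstar s a * Real.log (πstar s a / πt1 s a)
      = πstar s a * (β * ((∑ i, w i * φ s a i) - Vt s) - Real.log (Z s)) := by
    intro s a
    rcases eq_or_lt_of_le (hπsnn s a) with h | h
    · rw [← h]; ring
    · have hπt1pos : 0 < πt1 s a := by
        rw [hUpd s a]
        exact div_pos (mul_pos (hπtpos s a) (Real.exp_pos _)) (hZpos s)
      rw [Real.log_div h.ne' (hπtpos s a).ne', Real.log_div h.ne' hπt1pos.ne',
        hlog1 s a]
      ring
  -- per-state bracket identity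
  have hbracket : ∀ s,
      (∑ a, πstar s a * (Qt s a - ∑ i, w i * φ s a i))
      + (1/β) * Real.log (Z s)
      + (1/β) * ((∑ a, πstar s a * Real.log (πstar s a / πt s a))
          - ∑ a, πstar s a * Real.log (πstar s a / πt1 s a)) = g s := by
    intro s
    have hKL : (∑ a, πstar s a * Real.log (πstar s a / πt s a))
        - ∑ a, πstar s a * Real.log (πstar s a / πt1 s a)
        = ∑ a, πstar s a * (β * ((∑ i, w i * φ s a i) - Vt s) - Real.log (Z s)) := by
      rw [← Finset.sum_sub_distrib]
      exact Finset.sum_congr rfl fun a _ => hKLa s a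
    rw [hKL, hg]
    have h3 : ∑ a, πstar s a * (β * ((∑ i, w i * φ s a i) - Vt s) - Real.log (Z s))
        = (∑ a, πstar s a * (β * ((∑ i, w i * φ s a i) - Vt s))) - Real.log (Z s) := by
      simp_rw [mul_sub]
      rw [Finset.sum_sub_distrib, ← Finset.sum_mul, hπssum, one_mul]
    rw [h3, mul_sub]
    have h4 : (1/β) * ∑ a, πstar s a * (β * ((∑ i, w i * φ s a i) - Vt s))
        = ∑ a, πstar s a * ((∑ i, w i * φ s a i) - Vt s) := by
      rw [Finset.mul_sum]
      refine Finset.sum_congr rfl fun a _ => ?_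
      field_simp
    rw [h4]
    have h5 : ∑ a, πstar s a * (Qt s a - ∑ i, w i * φ s a i)
        + ∑ a, πstar s a * ((∑ i, w i * φ s a i) - Vt s)
        = ∑ a, πstar s a * (Qt s a - Vt s) := by
      rw [← Finset.sum_add_distrib]
      exact Finset.sum_congr rfl fun a _ => by ring
    linarith [h5]
  -- assemble
  have hcoef : 1/((1-γ)*β) = (1/(1-γ)) * (1/β) := by
    rw [one_div, mul_inv, ← one_div, ← one_div]
  calc (∑ s, μ s * Vval πstar Qstar s) - (∑ s, μ s * Vval πt Qt s)
      = ∑ s0, μ s0 * f s0 := by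
        rw [← Finset.sum_sub_distrib]
        refine Finset.sum_congr rfl fun s0 _ => ?_
        simp only [hf, hVtdef]
        ring
    _ = (1/(1-γ)) * ∑ s, dvisit M πstar μ s * g s := hmain.symm
    _ = _ := by
        rw [hcoef]
        rw [mul_assoc, mul_assoc, ← mul_add, ← mul_add]
        congr 1
        rw [Finset.mul_sum, Finset.mul_sum, ← Finset.sum_add_distrib,
          ← Finset.sum_add_distrib]
        refine Finset.sum_congr rfl fun s _ => ?_
        rw [← hbracket s]
        ring
end
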